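/- arXiv:2411.09491 — 9 statements merged into one kernel-verified Lean document; each statement's English description precedes it below -/
import Mathlib

section
/- Every Pascal tensor (of any order m ≥ 2) is strongly completely positive. -/
/-!
Writing `s! = ∫₀^∞ e^{-x} x^s dx` and substituting `t = x / (1 + x)` exhibits `(0!, …, N!)` as
the integral, against a finite measure, of a function with values on the compact curve
`t ↦ (t^s (1 - t)^{N - s})ₛ`, `t ∈ [0, 1]`. In finite dimension the convex hull of a compact set
is compact, so the average lies in it, and by Carathéodory the factorials are a finite nonnegative
combination `s! = ∑ₖ cₖ tₖ^s (1 - tₖ)^{N - s}`. With `N = m (n - 1)` this gives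
`P = ∑ₖ uₖ^{⊗m}` for `uₖ i = cₖ^{1/m} tₖ^i (1 - tₖ)^{n-1-i} / i!`.

The vectors `uₖ` span: if `x` is orthogonal to all of them, then `xᵀ A x = 0` for the slice
`A = P(·, ·, 0, …, 0)`, which is the Pascal matrix `((a + b).choose a)`. That matrix is `Bᵀ B`
for the unitriangular matrix `B t a = a.choose t` (Vandermonde's identity), hence positive
definite, so `x = 0`.
-/

open Set Module MeasureTheory Real Nat
open scoped Matrix

section ConvexHull

variable {E : Type*} [NormedAddCommGroup E] [NormedSpace ℝ E] [FiniteDimensional ℝ E]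

theorem mem_convexHull_iff_exists_fin_sum {s : Set E} {x : E} :
    x ∈ convexHull ℝ s ↔ ∃ k ≤ finrank ℝ E + 1, ∃ w ∈ stdSimplex ℝ (Fin k),
      ∃ z : Fin k → E, (∀ i, z i ∈ s) ∧ ∑ i, w i • z i = x := by
  refine ⟨fun hx => ?_, ?_⟩
  · obtain ⟨ι, _, z, w, hzs, hind, hw0, hw1, rfl⟩ := eq_pos_convex_span_of_mem_convexHull hx
    let e := Fintype.equivFin ι
    refine ⟨Fintype.card ι,
      hind.card_le_finrank_succ.trans (by gcongr; exact Submodule.finrank_le _),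
      w ∘ e.symm, ⟨fun i => (hw0 _).le, (e.symm.sum_comp w).trans hw1⟩, z ∘ e.symm,
      fun i => hzs (mem_range_self _), e.symm.sum_comp fun i => w i • z i⟩
  · rintro ⟨k, -, w, hw, z, hzs, rfl⟩
    exact (convex_convexHull ℝ s).sum_mem (fun i _ => hw.1 i) hw.2
      fun i _ => subset_convexHull ℝ s (hzs i)

theorem IsCompact.convexHull_of_finiteDimensional {s : Set E} (hs : IsCompact s) :
    IsCompact (convexHull ℝ s) := by
  have hcover : convexHull ℝ s = ⋃ k ∈ Iic (finrank ℝ E + 1),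
      (fun p : (Fin k → ℝ) × (Fin k → E) => ∑ i, p.1 i • p.2 i) ''
        (stdSimplex ℝ (Fin k) ×ˢ univ.pi fun _ => s) := by
    ext x
    simp only [mem_convexHull_iff_exists_fin_sum, mem_iUnion, mem_image, mem_prod, mem_univ_pi,
      mem_Iic, Prod.exists, exists_prop]
    aesop
  rw [hcover]
  exact (finite_Iic _).isCompact_biUnion fun k _ =>
    ((isCompact_stdSimplex ℝ _).prod (isCompact_univ_pi fun _ => hs)).image <|
      continuous_finsetSum _ fun i _ =>
        ((continuous_apply i).comp continuous_fst).smul ((continuous_apply i).comp continuous_snd)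

variable {α : Type*} [MeasurableSpace α] {K : Set E} {f : α → E}

theorem exists_sum_smul_eq_integral_of_ae_mem {μ : Measure α} [IsFiniteMeasure μ]
    (hK : IsCompact K) (hfK : ∀ᵐ x ∂μ, f x ∈ K) (hf : AEStronglyMeasurable f μ) :
    ∃ (r : ℕ) (c : Fin r → ℝ) (y : Fin r → E),
      (∀ k, 0 ≤ c k) ∧ (∀ k, y k ∈ K) ∧ ∑ k, c k • y k = ∫ x, f x ∂μ := by
  rcases eq_zero_or_neZero μ with rfl | _
  · exact ⟨0, Fin.elim0, Fin.elim0, Fin.rec0, Fin.rec0, by simp⟩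
  obtain ⟨C, hC⟩ := hK.isBounded.exists_norm_le
  have hfi : Integrable f μ := .of_bound hf C (hfK.mono fun x hx => hC _ hx)
  obtain ⟨k, -, w, hw, z, hz, hsum⟩ := mem_convexHull_iff_exists_fin_sum.1 <|
    (convex_convexHull ℝ K).average_mem hK.convexHull_of_finiteDimensional.isClosed
      (hfK.mono fun x hx => subset_convexHull ℝ K hx) hfi
  refine ⟨k, fun i => μ.real univ * w i, z, fun i => mul_nonneg measureReal_nonneg (hw.1 i), hz, ?_⟩
  simp_rw [mul_smul, ← Finset.smul_sum, hsum, average_eq, smul_inv_smul₀ measureReal_univ_ne_zero]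

theorem exists_sum_smul_eq_integral_smul_of_ae_mem {ν : Measure α} {ρ : α → ℝ}
    (hρ0 : 0 ≤ᵐ[ν] ρ) (hρ : Integrable ρ ν) (hK : IsCompact K) (hfK : ∀ᵐ x ∂ν, f x ∈ K)
    (hf : AEStronglyMeasurable f ν) :
    ∃ (r : ℕ) (c : Fin r → ℝ) (y : Fin r → E),
      (∀ k, 0 ≤ c k) ∧ (∀ k, y k ∈ K) ∧ ∑ k, c k • y k = ∫ x, ρ x • f x ∂ν := by
  have := isFiniteMeasure_withDensity_ofReal hρ.2
  have hac := withDensity_absolutelyContinuous ν fun x => ENNReal.ofReal (ρ x)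
  obtain ⟨r, c, y, hc, hy, hsum⟩ :=
    exists_sum_smul_eq_integral_of_ae_mem hK (hac.ae_le hfK) (hf.mono_ac hac)
  refine ⟨r, c, y, hc, hy, hsum.trans ?_⟩
  rw [integral_withDensity_eq_integral_toReal_smul₀ hρ.1.aemeasurable.ennreal_ofReal
    (.of_forall fun _ => ENNReal.ofReal_lt_top)]
  exact integral_congr_ae (hρ0.mono fun x hx => by simp only [ENNReal.toReal_ofReal hx])

end ConvexHull

theorem integrableOn_exp_neg_mul_pow (k : ℕ) :
    IntegrableOn (fun x => exp (-x) * x ^ k) (Ioi 0) := by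
  simpa [rpow_natCast] using GammaIntegral_convergent (s := k + 1) (by positivity)

theorem integral_exp_neg_mul_pow (k : ℕ) : ∫ x in Ioi 0, exp (-x) * x ^ k = k ! := by
  simpa [rpow_natCast] using
    (Gamma_eq_integral (s := k + 1) (by positivity)).symm.trans (Gamma_nat_eq_factorial k)

theorem integrableOn_exp_neg_mul_one_add_pow (N : ℕ) :
    IntegrableOn (fun x => exp (-x) * (1 + x) ^ N) (Ioi 0) := by
  have hexpand : (fun x => exp (-x) * (1 + x) ^ N) =
      fun x => ∑ k ∈ Finset.range (N + 1), (N.choose k : ℝ) * (exp (-x) * x ^ k) := by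
    ext x
    rw [add_comm, add_pow, Finset.mul_sum]
    exact Finset.sum_congr rfl fun k _ => by ring
  rw [hexpand]
  exact integrable_finsetSum _ fun k _ => (integrableOn_exp_neg_mul_pow k).const_mul _

theorem one_add_pow_mul_div_one_add_pow {x : ℝ} (hx : 0 ≤ x) {s N : ℕ} (hs : s ≤ N) :
    (1 + x) ^ N * ((x / (1 + x)) ^ s * (1 - x / (1 + x)) ^ (N - s)) = x ^ s := by
  have h : 1 + x ≠ 0 := by positivity
  rw [one_sub_div h, add_sub_cancel_right, ← Nat.add_sub_cancel' hs, pow_add,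
    Nat.add_sub_cancel_left, div_pow, div_pow, one_pow]
  field_simp

theorem exists_factorial_eq_sum (N : ℕ) :
    ∃ (r : ℕ) (c t : Fin r → ℝ), (∀ k, 0 ≤ c k) ∧ (∀ k, t k ∈ Icc 0 1) ∧
      ∀ s ≤ N, (s ! : ℝ) = ∑ k, c k * (t k ^ s * (1 - t k) ^ (N - s)) := by
  set γ : ℝ → Fin (N + 1) → ℝ := fun t s => t ^ (s : ℕ) * (1 - t) ^ (N - s)
  have hγ : Continuous γ := by fun_prop
  have hmem : ∀ x ∈ Ioi (0 : ℝ), x / (1 + x) ∈ Icc 0 1 := fun x hx =>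
    ⟨by have := hx.out; positivity, (div_le_one (by linarith [hx.out])).2 (by linarith)⟩
  obtain ⟨r, c, y, hc, hy, hsum⟩ := exists_sum_smul_eq_integral_smul_of_ae_mem
    (ν := volume.restrict (Ioi 0)) (ρ := fun x => exp (-x) * (1 + x) ^ N)
    (f := fun x => γ (x / (1 + x)))
    (ae_restrict_of_forall_mem measurableSet_Ioi fun x hx => by have := hx.out; positivity)
    (integrableOn_exp_neg_mul_one_add_pow N) (isCompact_Icc.image hγ)
    (ae_restrict_of_forall_mem measurableSet_Ioi fun x hx => mem_image_of_mem γ (hmem x hx))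
    (hγ.measurable.comp (by fun_prop)).aestronglyMeasurable
  choose t ht hty using hy
  have hcomp : ∀ s : Fin (N + 1), (fun x => ((exp (-x) * (1 + x) ^ N) • γ (x / (1 + x))) s)
      =ᵐ[volume.restrict (Ioi 0)] fun x => exp (-x) * x ^ (s : ℕ) :=
    fun s => ae_restrict_of_forall_mem measurableSet_Ioi fun x hx => by
      simp only [γ, Pi.smul_apply, smul_eq_mul, mul_assoc,
        one_add_pow_mul_div_one_add_pow hx.out.le (Nat.lt_succ_iff.1 s.2)]
  refine ⟨r, c, t, hc, ht, fun s hs => ?_⟩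
  have := congrFun hsum ⟨s, Nat.lt_succ_of_le hs⟩
  rw [eval_integral (fun i : Fin (N + 1) => (integrableOn_exp_neg_mul_pow i).congr (hcomp i).symm),
    integral_congr_ae (hcomp _), integral_exp_neg_mul_pow, Finset.sum_apply] at this
  simpa [← hty, γ] using this.symm

theorem Nat.add_choose_eq_sum_choose_mul_choose (a b : ℕ) :
    (a + b).choose a = ∑ t ∈ Finset.range (a + 1), a.choose t * b.choose t := by
  rw [add_comm, add_choose_eq, Finset.Nat.sum_antidiagonal_eq_sum_range_succ_mk]
  exact Finset.sum_congr rfl fun t ht => by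
    rw [choose_symm (Finset.mem_range_succ_iff.1 ht), mul_comm]

def pascalMatrix (n : ℕ) : Matrix (Fin n) (Fin n) ℝ := .of fun a b => ((a + b : ℕ).choose a : ℝ)

def binomialMatrix (n : ℕ) : Matrix (Fin n) (Fin n) ℝ := .of fun t a => ((a : ℕ).choose t : ℝ)

theorem pascalMatrix_eq_transpose_mul (n : ℕ) :
    pascalMatrix n = (binomialMatrix n)ᵀ * binomialMatrix n := by
  ext a b
  simp only [pascalMatrix, binomialMatrix, Matrix.mul_apply, Matrix.transpose_apply,
    Matrix.of_apply, add_choose_eq_sum_choose_mul_choose, Nat.cast_sum, Nat.cast_mul]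
  rw [Fin.sum_univ_eq_sum_range (fun t => ((a : ℕ).choose t : ℝ) * ((b : ℕ).choose t))]
  refine Finset.sum_subset (Finset.range_subset_range.2 a.2) fun t _ ht => ?_
  rw [choose_eq_zero_of_lt (by simpa using ht), Nat.cast_zero, zero_mul]

theorem det_binomialMatrix (n : ℕ) : (binomialMatrix n).det = 1 := by
  rw [Matrix.det_of_isUpperTriangular fun t a (h : a < t) => by
    simp [binomialMatrix, choose_eq_zero_of_lt (show (a : ℕ) < t from h)]]
  simp [binomialMatrix]

theorem posDef_pascalMatrix (n : ℕ) : (pascalMatrix n).PosDef := by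
  rw [pascalMatrix_eq_transpose_mul, ← Matrix.conjTranspose_eq_transpose_of_trivial]
  exact .conjTranspose_mul_self _
    (Matrix.mulVec_injective_of_det_ne_zero (by simp [det_binomialMatrix]))

theorem span_range_eq_top_of_posDef_slice {k r n : ℕ} {A : (Fin (k + 2) → Fin n) → ℝ}
    {u : Fin r → Fin n → ℝ} (hA : ∀ idx, A idx = ∑ j, ∏ l, u j (idx l)) (z : Fin n)
    (hpos : (Matrix.of fun a b => A (Fin.cons a (Fin.cons b fun _ => z))).PosDef) :
    Submodule.span ℝ (range u) = ⊤ := by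
  by_contra hne
  obtain ⟨f, hf0, hf⟩ :=
    (Submodule.span ℝ (range u)).exists_le_ker_of_lt_top (lt_top_iff_ne_top.2 hne)
  set x : Fin n → ℝ := fun a => f fun b => if a = b then 1 else 0
  have hfx : ∀ v, f v = v ⬝ᵥ x := fun v => by
    simp [LinearMap.pi_apply_eq_sum_univ f v, x, dotProduct]
  have hx : x ≠ 0 := fun h => hf0 <| LinearMap.ext fun v => by simp [hfx, h]
  have hslice : (Matrix.of fun a b => A (Fin.cons a (Fin.cons b fun _ => z))) =
      (Matrix.of u)ᵀ * Matrix.diagonal (fun j => u j z ^ k) * Matrix.of u := by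
    ext a b
    rw [Matrix.mul_apply]
    simp only [Matrix.of_apply, hA, Fin.prod_univ_succ, Fin.cons_zero, Fin.cons_succ,
      Finset.prod_const, Finset.card_univ, Fintype.card_fin, Matrix.mul_diagonal,
      Matrix.transpose_apply]
    exact Finset.sum_congr rfl fun j _ => by ring
  have hux : Matrix.of u *ᵥ x = 0 := funext fun j =>
    (hfx (u j)).symm.trans (hf (Submodule.subset_span (mem_range_self j)))
  have := hpos.dotProduct_mulVec_pos hx
  rw [hslice, ← Matrix.mulVec_mulVec, hux, Matrix.mulVec_zero, dotProduct_zero] at this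
  exact lt_irrefl _ this

-- Indices are `0`-based: the paper's `p_{i₁…iₘ}` is `pascalTensor m n (i₁ - 1, …, iₘ - 1)`.
noncomputable def pascalTensor (m n : ℕ) (idx : Fin m → Fin n) : ℝ :=
  ((∑ j, (idx j : ℕ))! : ℝ) / ∏ j, ((idx j : ℕ)! : ℝ)

theorem prod_pow_mul_pow_sub {M : Type*} [CommMonoid M] (a b : M) {m d : ℕ} {i : Fin m → ℕ}
    (hi : ∀ j, i j ≤ d) :
    ∏ j, a ^ i j * b ^ (d - i j) = a ^ (∑ j, i j) * b ^ (m * d - ∑ j, i j) := by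
  rw [Finset.prod_mul_distrib, Finset.prod_pow_eq_pow_sum, Finset.prod_pow_eq_pow_sum,
    Finset.sum_tsub_distrib _ fun j _ => hi j]
  simp

theorem pascalTensor_eq_sum_prod {m n r : ℕ} (hm : m ≠ 0) {c t : Fin r → ℝ} (hc : ∀ k, 0 ≤ c k)
    (hmoment : ∀ s ≤ m * (n - 1),
      (s ! : ℝ) = ∑ k, c k * (t k ^ s * (1 - t k) ^ (m * (n - 1) - s)))
    (idx : Fin m → Fin n) :
    pascalTensor m n idx = ∑ k, ∏ j,
      c k ^ (m : ℝ)⁻¹ * (t k ^ (idx j : ℕ) * (1 - t k) ^ (n - 1 - idx j) / (idx j : ℕ)!) := by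
  have hi : ∀ j, (idx j : ℕ) ≤ n - 1 := fun j => Nat.le_sub_one_of_lt (idx j).2
  have hs : ∑ j, (idx j : ℕ) ≤ m * (n - 1) := by
    simpa using Finset.sum_le_sum fun j (_ : j ∈ Finset.univ) => hi j
  rw [pascalTensor, hmoment _ hs, Finset.sum_div]
  refine Finset.sum_congr rfl fun k _ => ?_
  rw [Finset.prod_mul_distrib, Finset.prod_const, Finset.card_univ, Fintype.card_fin,
    rpow_inv_natCast_pow (hc k) hm, Finset.prod_div_distrib, prod_pow_mul_pow_sub _ _ hi,
    mul_div_assoc]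

theorem pascalTensor_slice (k n : ℕ) :
    (Matrix.of fun a b => pascalTensor (k + 2) (n + 1) (Fin.cons a (Fin.cons b fun _ => 0))) =
      pascalMatrix (n + 1) := by
  ext a b
  simp [pascalTensor, pascalMatrix, Fin.sum_univ_succ, Fin.prod_univ_succ, Nat.cast_add_choose]

/-- Every Pascal tensor (of any order m ≥ 2) is strongly completely
positive: it admits a decomposition into symmetric outer powers of nonnegative
vectors whose span is all of ℝⁿ. -/
theorem pascal_tensor_scp (m n : ℕ) (hm : 2 ≤ m)
    (P : (Fin m → Fin n) → ℝ)
    (hP : ∀ idx : Fin m → Fin n,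
      P idx = ((∑ j, (idx j : ℕ)).factorial : ℝ) / ∏ j, ((idx j : ℕ).factorial : ℝ)) :
    ∃ (r : ℕ) (u : Fin r → Fin n → ℝ),
      (∀ k i, 0 ≤ u k i) ∧ (∀ idx, P idx = ∑ k, ∏ j, u k (idx j)) ∧
      Submodule.span ℝ (Set.range u) = ⊤ := by
  obtain rfl : P = pascalTensor m n := funext hP
  obtain ⟨k, rfl⟩ := Nat.exists_eq_add_of_le' hm
  obtain ⟨r, c, t, hc, ht, hmoment⟩ := exists_factorial_eq_sum ((k + 2) * (n - 1))
  set u : Fin r → Fin n → ℝ := fun l i =>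
    c l ^ ((k + 2 : ℕ) : ℝ)⁻¹ * (t l ^ (i : ℕ) * (1 - t l) ^ (n - 1 - i) / (i : ℕ)!)
  have hdecomp : ∀ idx, pascalTensor (k + 2) n idx = ∑ l, ∏ j, u l (idx j) :=
    pascalTensor_eq_sum_prod (by omega) hc hmoment
  refine ⟨r, u, fun l i => ?_, hdecomp, ?_⟩
  · have := hc l
    have := (ht l).1
    have := sub_nonneg.2 (ht l).2
    positivity
  · rcases n with _ | n
    · exact Subsingleton.elim _ _
    exact span_range_eq_top_of_posDef_slice hdecomp 0
      ((pascalTensor_slice k n).symm ▸ posDef_pascalMatrix (n + 1))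
end

section
/- The symmetric Pascal matrix P = ((i+j−2)!/((i−1)!(j−1)!)) of size n × n is positive definite for every n ≥ 1. -/
open Finset Matrix

lemma vander_sum (i j n : ℕ) (hi : i < n) :
    (i + j).choose i = ∑ k ∈ Finset.range n, i.choose k * j.choose k := by
  rw [Nat.add_choose_eq, Finset.Nat.sum_antidiagonal_eq_sum_range_succ_mk]
  have h1 : ∑ k ∈ Finset.range (i+1), i.choose k * j.choose (i - k)
      = ∑ k ∈ Finset.range (i+1), i.choose k * j.choose k := by
    rw [← Finset.sum_range_reflect]
    refine Finset.sum_congr rfl fun k hk => ?_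
    rw [Finset.mem_range] at hk
    have hk' : k ≤ i := Nat.lt_succ_iff.mp hk
    rw [Nat.add_sub_cancel, Nat.sub_sub_self hk', Nat.choose_symm hk']
  rw [h1]
  refine Finset.sum_subset ?_ ?_
  · intro k hk; rw [Finset.mem_range] at *; omega
  · intro k _ hk
    rw [Finset.mem_range, not_lt] at hk
    rw [Nat.choose_eq_zero_of_lt (by omega), zero_mul]


/-- The n × n symmetric Pascal matrix P_{ij} = C(i+j−2, i−1)
(1-based), i.e. P_{ij} = C(i+j, i) in 0-based indexing, is positive definite. -/
theorem pascal_matrix_posdef (n : ℕ) (hn : 1 ≤ n) :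
    (Matrix.of fun i j : Fin n => ((Nat.choose ((i : ℕ) + j) i : ℕ) : ℝ)).PosDef := by
  set L : Matrix (Fin n) (Fin n) ℝ :=
    Matrix.of (fun i k : Fin n => ((Nat.choose (i : ℕ) (k : ℕ) : ℕ) : ℝ)) with hL
  have hP : (Matrix.of fun i j : Fin n => ((Nat.choose ((i : ℕ) + j) i : ℕ) : ℝ)) = L * Lᵀ := by
    ext i j
    simp only [Matrix.mul_apply, Matrix.transpose_apply, Matrix.of_apply, hL]
    rw [Fin.sum_univ_eq_sum_range (fun k => ((Nat.choose (i : ℕ) k : ℕ) : ℝ) * ((Nat.choose (j : ℕ) k : ℕ) : ℝ)) n]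
    rw [vander_sum (i : ℕ) (j : ℕ) n i.isLt]
    push_cast
    rfl
  have hBT : L.BlockTriangular OrderDual.toDual := by
    intro i j hij
    simp only [hL, Matrix.of_apply]
    rw [Nat.choose_eq_zero_of_lt (by exact_mod_cast hij), Nat.cast_zero]
  have hdet : L.det = 1 := by
    rw [Matrix.det_of_lowerTriangular L hBT]
    simp [hL]
  have hU : IsUnit L := (Matrix.isUnit_iff_isUnit_det L).mpr (by rw [hdet]; exact isUnit_one)
  refine Matrix.posDef_iff_dotProduct_mulVec.mpr ⟨?_, ?_⟩
  · rw [hP]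
    have h := Matrix.isHermitian_mul_conjTranspose_self L
    rwa [Matrix.conjTranspose_eq_transpose_of_trivial] at h
  · intro x hx
    have hst : star x = x := by simp
    rw [hP, hst, ← Matrix.mulVec_mulVec, dotProduct_mulVec, ← Matrix.mulVec_transpose,
      Matrix.mulVec_transpose]
    set v := Matrix.vecMul x L with hv
    have hvne : v ≠ 0 := by
      intro h
      apply hx
      have := Matrix.vecMul_injective_iff_isUnit.mpr hU
      exact this (by simp only [Matrix.zero_vecMul]; rw [← hv, h])
    have h1 : dotProduct v v ≠ 0 := by
      rwa [Ne, dotProduct_self_eq_zero]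
    have h2 : 0 ≤ dotProduct v v :=
      Finset.sum_nonneg fun i _ => mul_self_nonneg _
    exact lt_of_le_of_ne h2 (Ne.symm h1)
end

section
/- The determinant of the n × n symmetric Pascal matrix ((i+j−2)!/((i−1)!(j−1)!)) equals 1 for all n ≥ 1. -/
open Finset

lemma pascal_key (i j n : ℕ) (hj : j < n) :
    (i + j).choose i = ∑ k ∈ range n, i.choose k * j.choose k := by
  rw [Nat.choose_symm_add, Nat.add_choose_eq,
    Finset.Nat.sum_antidiagonal_eq_sum_range_succ (fun a b => i.choose a * j.choose b)]
  rw [Finset.sum_congr rfl (fun k hk => by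
    rw [Nat.choose_symm (Nat.lt_succ_iff.1 (Finset.mem_range.1 hk))])]
  exact Finset.sum_subset (Finset.range_subset_range.2 hj) fun k _ hk => by
    rw [Nat.choose_eq_zero_of_lt (by simpa using hk : j < k), Nat.mul_zero]

/-- The determinant of the n × n symmetric Pascal matrix equals 1. -/
theorem pascal_matrix_det_one (n : ℕ) (hn : 1 ≤ n) :
    (Matrix.of fun i j : Fin n => ((Nat.choose ((i : ℕ) + j) i : ℕ) : ℝ)).det = 1 := by
  set L : Matrix (Fin n) (Fin n) ℝ :=
    Matrix.of fun i k : Fin n => ((Nat.choose i k : ℕ) : ℝ) with hL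
  have hfactor : (Matrix.of fun i j : Fin n => ((Nat.choose ((i : ℕ) + j) i : ℕ) : ℝ))
      = L * L.transpose := by
    ext i j
    simp only [Matrix.mul_apply, Matrix.transpose_apply, hL, Matrix.of_apply]
    rw [Fin.sum_univ_eq_sum_range (fun k => ((Nat.choose i k : ℕ) : ℝ) * (Nat.choose j k : ℕ))]
    rw [pascal_key i j n j.isLt]
    push_cast
    ring
  have hLtri : L.BlockTriangular OrderDual.toDual := by
    intro i j hij
    simp only [hL, Matrix.of_apply]
    rw [Nat.choose_eq_zero_of_lt (by exact_mod_cast hij), Nat.cast_zero]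
  have hdetL : L.det = 1 := by
    rw [Matrix.det_of_lowerTriangular L hLtri]
    simp [hL]
  rw [hfactor, Matrix.det_mul, Matrix.det_transpose, hdetL, one_mul]
end

section
/- If A is a completely positive tensor of order m+2 (m even) and dimension n such that the sub-tensor A_{11} obtained by fixing the first two indices to 1 is positive definite, then A is strongly completely positive. -/
/-!
The given decomposition already spans. Otherwise some `x ≠ 0` is orthogonal to every `u k`, and
since `A₁₁ xᵐ = ∑ₖ (u k 1)² ⟨u k, x⟩ᵐ` this gives `A₁₁ xᵐ = 0` (as `m ≠ 0`), contradicting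
positive definiteness.
-/

open Submodule Set Matrix

theorem exists_ne_zero_forall_dotProduct_eq_zero {K ι n : Type*} [Field K] [Fintype n]
    [DecidableEq n] (v : ι → n → K) (h : span K (range v) ≠ ⊤) :
    ∃ x ≠ 0, ∀ k, x ⬝ᵥ v k = 0 := by
  obtain ⟨f, hf, hle⟩ := (span K (range v)).exists_le_ker_of_lt_top h.lt_top
  refine ⟨(dotProductEquiv K n).symm f, by simpa using hf, fun k => ?_⟩
  have hfk : f (v k) = 0 := hle (subset_span (mem_range_self k))
  rwa [← LinearEquiv.apply_symm_apply (dotProductEquiv K n) f] at hfk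

theorem sum_cons_cons_mul_prod_eq_sum_mul_dotProduct_pow {R ι κ : Type*} [CommSemiring R]
    [Fintype ι] [Fintype κ] {m : ℕ} {A : (Fin (m + 2) → ι) → R} {u : κ → ι → R}
    (hA : ∀ idx, A idx = ∑ k, ∏ j, u k (idx j)) (a b : ι) (x : ι → R) :
    ∑ idx : Fin m → ι, A (Fin.cons a (Fin.cons b idx)) * ∏ j, x (idx j) =
      ∑ k, u k a * u k b * (u k ⬝ᵥ x) ^ m := by
  simp_rw [hA, Finset.sum_mul, Fin.prod_univ_succ, Fin.cons_succ, Fin.cons_zero]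
  rw [Finset.sum_comm]
  refine Finset.sum_congr rfl fun k _ => ?_
  rw [dotProduct, Fintype.sum_pow, Finset.mul_sum]
  refine Finset.sum_congr rfl fun idx _ => ?_
  rw [Finset.prod_mul_distrib]
  ring

theorem cp_subtensor_posdef_imp_scp_general (m n : ℕ) (hm0 : m ≠ 0) (hn : 0 < n)
    (A : (Fin (m + 2) → Fin n) → ℝ)
    (hcp : ∃ (r : ℕ) (u : Fin r → Fin n → ℝ),
      (∀ k i, 0 ≤ u k i) ∧ ∀ idx, A idx = ∑ k, ∏ j, u k (idx j))
    (hpd : ∀ x : Fin n → ℝ, x ≠ 0 →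
      0 < ∑ idx : Fin m → Fin n,
        A (Fin.cons ⟨0, hn⟩ (Fin.cons ⟨0, hn⟩ idx)) * ∏ j, x (idx j)) :
    ∃ (r : ℕ) (u : Fin r → Fin n → ℝ),
      (∀ k i, 0 ≤ u k i) ∧ (∀ idx, A idx = ∑ k, ∏ j, u k (idx j)) ∧
      Submodule.span ℝ (Set.range u) = ⊤ := by
  obtain ⟨r, u, hu, hA⟩ := hcp
  refine ⟨r, u, hu, hA, ?_⟩
  by_contra hspan
  obtain ⟨x, hx0, hxu⟩ := exists_ne_zero_forall_dotProduct_eq_zero u hspan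
  have hpos := hpd x hx0
  simp_rw [sum_cons_cons_mul_prod_eq_sum_mul_dotProduct_pow hA, dotProduct_comm (u _) x, hxu,
    zero_pow hm0, mul_zero, Finset.sum_const_zero] at hpos
  exact lt_irrefl 0 hpos

/-- If A is a completely positive tensor of order m+2 (m even) and
dimension n such that the sub-tensor A₁₁ obtained by fixing the first two indices
to 1 is positive definite, then A is strongly completely positive. -/
theorem cp_subtensor_posdef_imp_scp (m n : ℕ) (hm : Even m) (hm0 : m ≠ 0) (hn : 0 < n)
    (A : (Fin (m + 2) → Fin n) → ℝ)
    (hcp : ∃ (r : ℕ) (u : Fin r → Fin n → ℝ),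
      (∀ k i, 0 ≤ u k i) ∧ ∀ idx, A idx = ∑ k, ∏ j, u k (idx j))
    (hpd : ∀ x : Fin n → ℝ, x ≠ 0 →
      0 < ∑ idx : Fin m → Fin n,
        A (Fin.cons ⟨0, hn⟩ (Fin.cons ⟨0, hn⟩ idx)) * ∏ j, x (idx j)) :
    ∃ (r : ℕ) (u : Fin r → Fin n → ℝ),
      (∀ k i, 0 ≤ u k i) ∧ (∀ idx, A idx = ∑ k, ∏ j, u k (idx j)) ∧
      Submodule.span ℝ (Set.range u) = ⊤ :=
  cp_subtensor_posdef_imp_scp_general m n hm0 hn A hcp hpd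
end

section
/- Let A be a completely positive tensor of odd order m+1 and dimension n. If the sub-tensor A_1 obtained by fixing the first index to 1 is positive definite (as an even order tensor), then A is strongly completely positive. -/
/-!
If the decomposition vectors `u k` did not span, some `x ≠ 0` would be orthogonal to all of
them. Contracting `A = ∑ₖ (u k)^{⊗(m+1)}` with `e₁ ⊗ x^{⊗m}` gives
`A₁ x^m = ∑ₖ (u k)₁ ⟪u k, x⟫^m = 0` (as `m ≠ 0`), contradicting positive definiteness of `A₁`.
So the given nonnegative decomposition already witnesses strong complete positivity.
-/

open Finset Matrix

theorem exists_ne_zero_forall_dotProduct_eq_zero_of_span_ne_top {K ι : Type*} [Field K]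
    [Fintype ι] {s : Set (ι → K)} (hs : Submodule.span K s ≠ ⊤) :
    ∃ x ≠ 0, ∀ v ∈ s, v ⬝ᵥ x = 0 := by
  classical
  obtain ⟨f, hf0, hf⟩ :=
    Submodule.exists_dual_map_eq_bot_of_lt_top (lt_top_iff_ne_top.mpr hs) inferInstance
  set x : ι → K := fun i => f fun j => if i = j then 1 else 0
  have hfx : ∀ v, f v = v ⬝ᵥ x := fun v => by
    simp [LinearMap.pi_apply_eq_sum_univ f v, dotProduct, x]
  refine ⟨x, fun hx => hf0 (LinearMap.ext fun v => by simp [hfx, hx]), fun v hv => ?_⟩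
  rw [← hfx, ← Submodule.mem_bot K, ← hf]
  exact Submodule.mem_map_of_mem (Submodule.subset_span hv)

theorem sum_cons_mul_prod_eq_sum_mul_dotProduct_pow {ι κ R : Type*} [Fintype ι] [Fintype κ]
    [CommSemiring R] {m : ℕ} {A : (Fin (m + 1) → ι) → R} {u : κ → ι → R}
    (hA : ∀ idx, A idx = ∑ k, ∏ j, u k (idx j)) (i₀ : ι) (x : ι → R) :
    ∑ idx : Fin m → ι, A (Fin.cons i₀ idx) * ∏ j, x (idx j) =
      ∑ k, u k i₀ * (u k ⬝ᵥ x) ^ m := by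
  simp only [hA, Fin.prod_univ_succ, Fin.cons_zero, Fin.cons_succ, sum_mul, dotProduct,
    Fintype.sum_pow, mul_sum]
  rw [sum_comm]
  refine sum_congr rfl fun k _ => sum_congr rfl fun idx _ => ?_
  rw [prod_mul_distrib]
  ring

theorem odd_cp_subtensor_posdef_imp_scp_general (m n : ℕ) (hm0 : m ≠ 0) (hn : 0 < n)
    (A : (Fin (m + 1) → Fin n) → ℝ)
    (hcp : ∃ (r : ℕ) (u : Fin r → Fin n → ℝ),
      (∀ k i, 0 ≤ u k i) ∧ ∀ idx, A idx = ∑ k, ∏ j, u k (idx j))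
    (hpd : ∀ x : Fin n → ℝ, x ≠ 0 →
      0 < ∑ idx : Fin m → Fin n, A (Fin.cons ⟨0, hn⟩ idx) * ∏ j, x (idx j)) :
    ∃ (r : ℕ) (u : Fin r → Fin n → ℝ),
      (∀ k i, 0 ≤ u k i) ∧ (∀ idx, A idx = ∑ k, ∏ j, u k (idx j)) ∧
      Submodule.span ℝ (Set.range u) = ⊤ := by
  obtain ⟨r, u, hu_nonneg, hA⟩ := hcp
  refine ⟨r, u, hu_nonneg, hA, ?_⟩
  by_contra hspan
  obtain ⟨x, hx0, hux⟩ := exists_ne_zero_forall_dotProduct_eq_zero_of_span_ne_top hspan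
  have hpos := hpd x hx0
  rw [sum_cons_mul_prod_eq_sum_mul_dotProduct_pow hA] at hpos
  simp [Set.forall_mem_range.mp hux, zero_pow hm0] at hpos

/-- Let A be a completely positive tensor of odd order m+1 (m even) and
dimension n.  If the sub-tensor A₁ obtained by fixing the first index to 1 is positive
definite (as an even order tensor), then A is strongly completely positive. -/
theorem odd_cp_subtensor_posdef_imp_scp (m n : ℕ) (hm : Even m) (hm0 : m ≠ 0) (hn : 0 < n)
    (A : (Fin (m + 1) → Fin n) → ℝ)
    (hcp : ∃ (r : ℕ) (u : Fin r → Fin n → ℝ),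
      (∀ k i, 0 ≤ u k i) ∧ ∀ idx, A idx = ∑ k, ∏ j, u k (idx j))
    (hpd : ∀ x : Fin n → ℝ, x ≠ 0 →
      0 < ∑ idx : Fin m → Fin n, A (Fin.cons ⟨0, hn⟩ idx) * ∏ j, x (idx j)) :
    ∃ (r : ℕ) (u : Fin r → Fin n → ℝ),
      (∀ k i, 0 ≤ u k i) ∧ (∀ idx, A idx = ∑ k, ∏ j, u k (idx j)) ∧
      Submodule.span ℝ (Set.range u) = ⊤ :=
  odd_cp_subtensor_posdef_imp_scp_general m n hm0 hn A hcp hpd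
end

section
/- For every m ≥ 2, the determinant of the 2(m−1) × 2(m−1) Sylvester-Pascal matrix S_m equals [(m−1)!]^m. -/
/-!
Write `n = m - 1`, `P = ∑ₜ n^{(t)} Xᵗ` (falling factorials, so `P` is the reversal of
`n! ∑ₖ Xᵏ / k!`) and `Q = (X P)'`. The coefficient rows of `S_m` are those of `P` and `Q`, so
`S_m` is the transposed Sylvester matrix of `Q` and `P` and `det S_m = Res(Q, P)`.
Comparing coefficients gives `X Q = 1 + ((n + 1) X - 1) P`; hence
`Res(P, X) Res(P, Q) = Res(P, X Q) = Res(P, 1) = (lead P)^(n+1) = (n!)^(n+1)`,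
and `Res(P, X) = (-1)ⁿ P(0) = (-1)ⁿ` is exactly the sign that `Res(Q, P) = (-1)^(n²) Res(P, Q)`
absorbs.
-/

/-- `a_i = C(m−1,i)·i!` (with `a_0 = 1`). -/
def pascalA (m i : ℕ) : ℕ := Nat.choose (m - 1) i * i.factorial

/-- `b_i = C(m−1,i)·(i+1)!` (with `b_0 = 1`). -/
def pascalB (m i : ℕ) : ℕ := Nat.choose (m - 1) i * (i + 1).factorial

/-- The 2(m−1) × 2(m−1) Sylvester-Pascal matrix: its first m−1 rows are shifted copies
of (1, a₁, …, a_{m−1}) and its last m−1 rows are shifted copies of (1, b₁, …, b_{m−1}),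
row k having its block start at column k. -/
def sylvesterPascal (m : ℕ) : Matrix (Fin (2 * (m - 1))) (Fin (2 * (m - 1))) ℝ :=
  Matrix.of fun i j =>
    if (i : ℕ) < m - 1 then
      (if (i : ℕ) ≤ (j : ℕ) ∧ (j : ℕ) ≤ (i : ℕ) + (m - 1) then
        (pascalA m ((j : ℕ) - (i : ℕ)) : ℝ) else 0)
    else
      (if (i : ℕ) - (m - 1) ≤ (j : ℕ) ∧ (j : ℕ) ≤ (i : ℕ) - (m - 1) + (m - 1) then
        (pascalB m ((j : ℕ) - ((i : ℕ) - (m - 1))) : ℝ) else 0)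

open Polynomial Matrix
open scoped Nat

lemma Nat.succ_mul_descFactorial_add_descFactorial_succ (n t : ℕ) :
    (t + 1) * n.descFactorial t + n.descFactorial (t + 1) = (n + 1) * n.descFactorial t := by
  rw [Nat.descFactorial_succ, ← add_mul]
  rcases le_or_gt t n with h | h
  · congr 1
    omega
  · simp [Nat.descFactorial_eq_zero_iff_lt.mpr h]

lemma pascalA_add_one (n t : ℕ) : pascalA (n + 1) t = n.descFactorial t := by
  rw [pascalA, Nat.descFactorial_eq_factorial_mul_choose, Nat.add_sub_cancel, mul_comm]

lemma pascalB_add_one (n t : ℕ) : pascalB (n + 1) t = (t + 1) * n.descFactorial t := by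
  rw [pascalB, Nat.descFactorial_eq_factorial_mul_choose, Nat.add_sub_cancel,
    Nat.factorial_succ]
  ring

section PascalPoly

variable (R : Type*) [CommRing R] (n : ℕ)

noncomputable def pascalPolyA : R[X] :=
  ∑ t ∈ Finset.range (n + 1), C (n.descFactorial t : R) * X ^ t

noncomputable def pascalPolyB : R[X] :=
  derivative (X * pascalPolyA R n)

variable {R}

lemma coeff_pascalPolyA (t : ℕ) : (pascalPolyA R n).coeff t = n.descFactorial t := by
  rw [pascalPolyA, finsetSum_coeff]
  simp_rw [coeff_C_mul_X_pow]
  rw [Finset.sum_ite_eq, ite_eq_left_iff, Finset.mem_range, not_lt]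
  intro h
  rw [Nat.descFactorial_eq_zero_iff_lt.mpr (by omega), Nat.cast_zero]

lemma coeff_pascalPolyB (t : ℕ) :
    (pascalPolyB R n).coeff t = (t + 1) * n.descFactorial t := by
  rw [pascalPolyB, coeff_derivative, coeff_X_mul, coeff_pascalPolyA, mul_comm]

lemma natDegree_pascalPolyA_le : (pascalPolyA R n).natDegree ≤ n :=
  natDegree_le_iff_coeff_eq_zero.mpr fun t ht => by
    rw [coeff_pascalPolyA, Nat.descFactorial_eq_zero_iff_lt.mpr (by exact_mod_cast ht),
      Nat.cast_zero]

lemma natDegree_pascalPolyB [CharZero R] : (pascalPolyB R n).natDegree = n := by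
  apply natDegree_eq_of_le_of_coeff_ne_zero
  · exact natDegree_le_iff_coeff_eq_zero.mpr fun t ht => by
      rw [coeff_pascalPolyB, Nat.descFactorial_eq_zero_iff_lt.mpr (by exact_mod_cast ht),
        Nat.cast_zero, mul_zero]
  · rw [coeff_pascalPolyB, Nat.descFactorial_self]
    exact_mod_cast (Nat.mul_pos n.succ_pos n.factorial_pos).ne'

lemma X_mul_pascalPolyB :
    X * pascalPolyB R n = 1 + pascalPolyA R n * (C (n + 1 : R) * X - 1) := by
  ext (_ | t)
  · simp [coeff_pascalPolyA]
  · rw [coeff_X_mul, coeff_add, coeff_one, if_neg t.succ_ne_zero, zero_add, mul_sub, mul_one,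
      coeff_sub, ← mul_assoc, coeff_mul_X, mul_comm, coeff_C_mul, coeff_pascalPolyA,
      coeff_pascalPolyA, coeff_pascalPolyB]
    have := congrArg (Nat.cast : ℕ → R) (Nat.succ_mul_descFactorial_add_descFactorial_succ n t)
    push_cast at this
    linear_combination this

lemma resultant_pascalPolyA_X : (pascalPolyA R n).resultant X n 1 = (-1) ^ n := by
  have := resultant_X_pow_right (pascalPolyA R n) n 1 (natDegree_pascalPolyA_le n)
  rwa [pow_one, pow_one, mul_one, coeff_pascalPolyA, Nat.descFactorial_zero, Nat.cast_one,
    mul_one] at this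

lemma resultant_pascalPolyA_X_mul_pascalPolyB :
    (pascalPolyA R n).resultant (X * pascalPolyB R n) n (1 + n) = (n ! : R) ^ (1 + n) := by
  have hdeg : (C (n + 1 : R) * X - 1).natDegree ≤ 1 := by compute_degree
  rw [X_mul_pascalPolyB, resultant_add_mul_right _ _ _ _ _ (by omega) (natDegree_pascalPolyA_le n),
    resultant_one_right, coeff_pascalPolyA, Nat.descFactorial_self]

lemma resultant_pascalPolyB_pascalPolyA [CharZero R] :
    (pascalPolyB R n).resultant (pascalPolyA R n) n n = (n ! : R) ^ (n + 1) := by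
  have hmul := resultant_mul_right (pascalPolyA R n) X (pascalPolyB R n) n
    (natDegree_pascalPolyA_le n)
  rw [natDegree_X, natDegree_pascalPolyB, resultant_pascalPolyA_X_mul_pascalPolyB,
    resultant_pascalPolyA_X] at hmul
  have hsign : (-1 : R) ^ (n * n) = (-1) ^ n := by
    rw [pow_mul]
    rcases n.even_or_odd with h | h <;> simp [h.neg_one_pow]
  rw [resultant_comm, hsign, ← hmul, add_comm]

end PascalPoly

lemma sylvesterPascal_add_one_eq_sylvester_transpose (n : ℕ) :
    sylvesterPascal (n + 1) = ((sylvester (pascalPolyB ℝ n) (pascalPolyA ℝ n) n n)ᵀ).reindex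
      (finCongr (two_mul n).symm) (finCongr (two_mul n).symm) := by
  ext i j
  obtain ⟨i, rfl⟩ := (finCongr (two_mul n).symm).surjective i
  simp only [sylvesterPascal, sylvester, reindex_apply, submatrix_apply, transpose_apply, of_apply,
    finCongr_symm, finCongr_apply, Fin.cast_cast, Fin.cast_eq_self, Set.mem_Icc, Fin.val_cast,
    Nat.add_one_sub_one]
  induction i using Fin.addCases with
  | left i =>
    simp only [Fin.addCases_left, Fin.val_castAdd, Fin.is_lt, if_true, pascalA_add_one,
      coeff_pascalPolyA]
  | right i =>
    simp only [Fin.addCases_right, Fin.val_natAdd, add_lt_iff_neg_left, not_lt_zero, if_false,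
      Nat.add_sub_cancel_left, pascalB_add_one, coeff_pascalPolyB]
    push_cast
    rfl

theorem det_sylvester_pascal_general (m : ℕ) :
    (sylvesterPascal m).det = (((m - 1).factorial : ℝ)) ^ m := by
  obtain _ | n := m
  · simp
  rw [sylvesterPascal_add_one_eq_sylvester_transpose, det_reindex_self, det_transpose,
    ← resultant, resultant_pascalPolyB_pascalPolyA, Nat.add_one_sub_one]

/-- For every m ≥ 2, det S_m = [(m−1)!]^m. -/
theorem det_sylvester_pascal (m : ℕ) (hm : 2 ≤ m) :
    (sylvesterPascal m).det = (((m - 1).factorial : ℝ)) ^ m :=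
  det_sylvester_pascal_general m
end

section
/- In the LU decomposition T_m = L_m U_m of the row-permuted Sylvester-Pascal matrix T_m (L_m unit lower triangular), the diagonal entries of U_m satisfy u_{2i−1,2i−1} = i! and u_{2i,2i} = (−1)^i · C(m−1,i) · i! for i = 1,...,m−1. -/
open Finset

/-- The row-permuted (interleaved) Sylvester-Pascal matrix T_m: its (2k−1)-th row
(1-based) is the b-row starting at column k and its 2k-th row is the a-row starting
at column k. -/
def tMatPascal (m : ℕ) : Matrix (Fin (2 * (m - 1))) (Fin (2 * (m - 1))) ℝ :=
  Matrix.of fun i j =>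
    if (i : ℕ) / 2 ≤ (j : ℕ) ∧ (j : ℕ) ≤ (i : ℕ) / 2 + (m - 1) then
      (if (i : ℕ) % 2 = 0 then (pascalB m ((j : ℕ) - (i : ℕ) / 2) : ℝ)
        else (pascalA m ((j : ℕ) - (i : ℕ) / 2) : ℝ))
    else 0

/-! ### Auxiliary machinery -/

/-- product of `d` consecutive integers starting at `x+1`. -/
def ffp (x : ℤ) : ℕ → ℤ
  | 0 => 1
  | d+1 => ffp x d * (x + d + 1)

@[simp] lemma ffp_zero (x : ℤ) : ffp x 0 = 1 := rfl
lemma ffp_succ (x : ℤ) (d : ℕ) : ffp x (d+1) = ffp x d * (x + d + 1) := rfl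

/-- `afac q t = (q+1)(q+2)⋯(q+t)`. -/
def afac (q : ℕ) : ℕ → ℕ
  | 0 => 1
  | t+1 => afac q t * (q + t + 1)

@[simp] lemma afac_zero (q : ℕ) : afac q 0 = 1 := rfl
lemma afac_succ (q t : ℕ) : afac q (t+1) = afac q t * (q + t + 1) := rfl

lemma afac_ffp (q t : ℕ) : ((afac q t : ℕ) : ℤ) = ffp (q : ℤ) t := by
  induction t with
  | zero => simp
  | succ t ih => rw [afac_succ, ffp_succ, ← ih]; push_cast; ring

lemma afac_factorial (q t : ℕ) : afac q t * q.factorial = (q+t).factorial := by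
  induction t with
  | zero => simp
  | succ t ih =>
      rw [afac_succ, show q + (t+1) = (q+t)+1 by omega, Nat.factorial_succ, ← ih]
      ring

lemma ffp_succ_left (x : ℤ) (d : ℕ) : ffp x (d+1) = (x+1) * ffp (x+1) d := by
  induction d with
  | zero => simp [ffp_succ]
  | succ d ih =>
      rw [ffp_succ, ih, ffp_succ]
      push_cast
      ring

lemma ffp_factorial (v d : ℕ) : ffp (v : ℤ) d * (v.factorial : ℤ) = ((v+d).factorial : ℤ) := by
  induction d with
  | zero => simp
  | succ d ih =>
      rw [ffp_succ, mul_right_comm, ih]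
      have : v + (d+1) = (v+d) + 1 := by omega
      rw [this, Nat.factorial_succ]
      push_cast
      ring

lemma ffp_eq_zero : ∀ (d : ℕ) (x : ℤ), x + 1 ≤ 0 → 0 ≤ x + d → ffp x d = 0 := by
  intro d
  induction d with
  | zero => intro x h1 h2; omega
  | succ d ih =>
      intro x h1 h2
      rw [ffp_succ]
      rcases eq_or_lt_of_le h2 with h | h
      · have : x + (d:ℤ) + 1 = 0 := by push_cast at h ⊢; omega
        rw [this, mul_zero]
      · have hd : (0:ℤ) ≤ x + d := by push_cast at h ⊢; omega
        rw [ih x h1 hd, zero_mul]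

lemma pascal_sum {R : Type*} [CommRing R] (A : ℕ) (g : ℕ → R) :
    ∑ t ∈ range (A+2), (-1)^t * ((A+1).choose t : R) * g t
      = ∑ t ∈ range (A+1), (-1)^t * (A.choose t : R) * (g t - g (t+1)) := by
  rw [Finset.sum_range_succ' (fun t => (-1)^t * ((A+1).choose t : R) * g t) (A+1)]
  have h1 : ∀ t, (((A+1).choose (t+1) : ℕ) : R) = (A.choose t : R) + (A.choose (t+1) : R) := by
    intro t
    rw [Nat.choose_succ_succ]
    push_cast; ring
  calc (∑ t ∈ range (A+1), (-1)^(t+1) * ((A+1).choose (t+1) : R) * g (t+1))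
        + (-1)^0 * ((A+1).choose 0 : R) * g 0
      = (∑ t ∈ range (A+1), ((-1)^(t+1) * (A.choose t : R) * g (t+1)
          + (-1)^(t+1) * (A.choose (t+1) : R) * g (t+1))) + g 0 := by
        simp only [h1, Nat.choose_zero_right, Nat.cast_one]
        rw [pow_zero, one_mul, one_mul]
        congr 1
        apply Finset.sum_congr rfl; intro t _; ring
    _ = (∑ t ∈ range (A+1), (-1)^(t+1) * (A.choose t : R) * g (t+1))
        + ((∑ t ∈ range (A+1), (-1)^(t+1) * (A.choose (t+1) : R) * g (t+1)) + g 0) := by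
        rw [Finset.sum_add_distrib]; ring
    _ = (∑ t ∈ range (A+1), (-1)^(t+1) * (A.choose t : R) * g (t+1))
        + ∑ t ∈ range (A+2), (-1)^t * (A.choose t : R) * g t := by
        rw [Finset.sum_range_succ' (fun t => (-1)^t * (A.choose t : R) * g t) (A+1)]
        simp
    _ = (∑ t ∈ range (A+1), (-1)^(t+1) * (A.choose t : R) * g (t+1))
        + ∑ t ∈ range (A+1), (-1)^t * (A.choose t : R) * g t := by
        rw [Finset.sum_range_succ (fun t => (-1)^t * (A.choose t : R) * g t) (A+1)]
        simp
    _ = ∑ t ∈ range (A+1), (-1)^t * (A.choose t : R) * (g t - g (t+1)) := by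
        rw [← Finset.sum_add_distrib]
        congr 1; funext t; ring

lemma key_lemma : ∀ (d A : ℕ), d < A → ∀ x : ℤ,
    ∑ t ∈ range (A+1), (-1)^t * (A.choose t : ℤ) * ffp (x+t) d = 0 := by
  intro d
  induction d with
  | zero =>
      intro A hA x
      simp only [ffp_zero, mul_one]
      exact Int.alternating_sum_range_choose_of_ne (by omega)
  | succ d ih =>
      intro A hA x
      obtain ⟨B, rfl⟩ : ∃ B, A = B + 1 := ⟨A - 1, by omega⟩
      rw [show B + 1 + 1 = B + 2 from rfl, pascal_sum B (fun t => ffp (x+t) (d+1))]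
      have hdiff : ∀ t : ℕ, ffp (x+t) (d+1) - ffp (x+(t+1)) (d+1)
          = -(d+1) * ffp ((x+1)+t) d := by
        intro t
        push_cast
        rw [ffp_succ_left (x+(t:ℤ)) d, show x+((t:ℤ)+1) = x+(t:ℤ)+1 by ring,
          ffp_succ (x+(t:ℤ)+1) d, show x+1+(t:ℤ) = x+(t:ℤ)+1 by ring]
        ring
      calc ∑ t ∈ range (B+1), (-1)^t * (B.choose t : ℤ) *
              (ffp (x+t) (d+1) - ffp (x+(t+1)) (d+1))
          = -(d+1) * ∑ t ∈ range (B+1), (-1)^t * (B.choose t : ℤ) * ffp ((x+1)+t) d := by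
            rw [Finset.mul_sum]; congr 1; funext t; rw [hdiff t]; ring
        _ = 0 := by rw [ih B (by omega) (x+1)]; ring

lemma partial_alt (n : ℕ) :
    ∑ t ∈ range (n+1), ((-1)^t * ((n+1).choose t) : ℤ) = (-1)^n := by
  have h := Int.alternating_sum_range_choose_of_ne (n := n+1) (by omega)
  rw [Finset.sum_range_succ] at h
  simp only [Nat.choose_self, Nat.cast_one, mul_one] at h
  have h2 : ((-1:ℤ))^(n+1) = -(-1)^n := by ring
  linarith

lemma beta_lemma : ∀ (c : ℕ) (x : ℝ), 0 < x →
    ∑ t ∈ range (c+1), (-1)^t * (c.choose t : ℝ) / (x+t)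
      = (c.factorial : ℝ) / ∏ r ∈ range (c+1), (x+r) := by
  intro c
  induction c with
  | zero => intro x hx; simp
  | succ c ih =>
      intro x hx
      have hps := pascal_sum (R := ℝ) c (fun t => 1/(x+t))
      have hconv : ∀ (n : ℕ) (y : ℝ),
          ∑ t ∈ range (n+1), (-1)^t * (n.choose t : ℝ) * (1/(y+t))
            = ∑ t ∈ range (n+1), (-1)^t * (n.choose t : ℝ) / (y+t) := by
        intro n y
        apply Finset.sum_congr rfl; intro t _; ring
      rw [hconv (c+1) x] at hps
      rw [hps]
      have hsplit : ∑ t ∈ range (c+1), (-1)^t * (c.choose t : ℝ)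
            * ((fun t => 1/(x+(t:ℕ))) t - (fun t => 1/(x+(t:ℕ))) (t+1))
          = (∑ t ∈ range (c+1), (-1)^t * (c.choose t : ℝ) / (x+t))
            - ∑ t ∈ range (c+1), (-1)^t * (c.choose t : ℝ) / ((x+1)+t) := by
        rw [← Finset.sum_sub_distrib]
        apply Finset.sum_congr rfl; intro t ht
        push_cast
        rw [mul_sub]
        congr 1
        · ring
        · rw [show x+((t:ℝ)+1) = (x+1)+t by ring]; ring
      rw [hsplit, ih x hx, ih (x+1) (by linarith)]
      have hpos : ∀ y : ℝ, 0 < y → (0:ℝ) < ∏ r ∈ range (c+1), (y+r) := by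
        intro y hy
        apply Finset.prod_pos; intro r _; positivity
      have h1 : ∏ r ∈ range (c+2), (x+r) = (∏ r ∈ range (c+1), (x+r)) * (x+c+1) := by
        rw [Finset.prod_range_succ]; push_cast; ring
      have h2 : ∏ r ∈ range (c+2), (x+r) = x * ∏ r ∈ range (c+1), ((x+1)+r) := by
        rw [Finset.prod_range_succ' (fun r => (x+(r:ℕ))) (c+1)]
        push_cast
        rw [add_zero, mul_comm]
        congr 1
        exact Finset.prod_congr rfl (fun r _ => by ring)
      have hp := hpos x hx
      have hq := hpos (x+1) (by linarith)
      have hrel : (∏ r ∈ range (c+1), (x+r)) * (x+c+1)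
          = x * ∏ r ∈ range (c+1), ((x+1)+r) := by rw [← h1, ← h2]
      rw [h1]
      rw [div_sub_div _ _ hp.ne' hq.ne', div_eq_div_iff (by positivity) (by positivity),
        Nat.factorial_succ]
      push_cast
      linear_combination (-(c.factorial:ℝ) * ∏ r ∈ range (c+1), (x+(r:ℕ))) * hrel

lemma zsum_trunc (A J : ℕ) (hAJ : A ≤ J) (f : ℕ → ℤ) :
    ∑ t ∈ range (J+1), (-1)^t * (A.choose t : ℤ) * f t
      = ∑ t ∈ range (A+1), (-1)^t * (A.choose t : ℤ) * f t := by
  symm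
  apply Finset.sum_subset
  · intro t ht; rw [mem_range] at *; omega
  · intro t _ ht2
    rw [mem_range] at ht2
    have : A.choose t = 0 := Nat.choose_eq_zero_of_lt (by omega)
    rw [this]
    push_cast
    ring

lemma zsum_odd (A d J : ℕ) (x : ℤ) (hdA : d < A) (hAJ : A ≤ J) :
    ∑ t ∈ range (J+1), (-1)^t * (A.choose t : ℤ) * ffp (x+t) d = 0 := by
  rw [zsum_trunc A J hAJ]
  exact key_lemma d A hdA x

lemma zsum_even (A d J : ℕ) (x : ℤ) (hdA : d + 1 < A) (hAJ : A ≤ J + 1) :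
    ∑ t ∈ range (J+1), (-1)^t * (A.choose t : ℤ) * (((J:ℤ)+1-t) * ffp (x+t) d) = 0 := by
  have hsplit : ∀ t : ℕ, ((J:ℤ)+1-t) * ffp (x+t) d
      = ((J:ℤ)+x+d+2) * ffp (x+t) d - ffp (x+t) (d+1) := by
    intro t
    rw [ffp_succ]
    ring
  have hstep : ∀ N : ℕ, ∑ t ∈ range N, (-1)^t * (A.choose t : ℤ) * (((J:ℤ)+1-t) * ffp (x+t) d)
      = ((J:ℤ)+x+d+2) * (∑ t ∈ range N, (-1)^t * (A.choose t : ℤ) * ffp (x+t) d)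
        - ∑ t ∈ range N, (-1)^t * (A.choose t : ℤ) * ffp (x+t) (d+1) := by
    intro N
    rw [Finset.mul_sum, ← Finset.sum_sub_distrib]
    apply Finset.sum_congr rfl
    intro t _
    rw [hsplit t]
    ring
  rcases Nat.lt_or_ge J A with hJA | hAJ'
  · have hA : A = J + 1 := by omega
    subst hA
    have hext : ∑ t ∈ range (J+1), (-1)^t * ((J+1).choose t : ℤ) * (((J:ℤ)+1-t) * ffp (x+t) d)
        = ∑ t ∈ range (J+2), (-1)^t * ((J+1).choose t : ℤ) * (((J:ℤ)+1-t) * ffp (x+t) d) := by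
      conv_rhs => rw [Finset.sum_range_succ]
      have : ((J:ℤ)+1-((J+1 : ℕ) : ℤ)) = 0 := by push_cast; ring
      rw [this]
      ring
    rw [hext, hstep (J+2)]
    rw [key_lemma d (J+1) (by omega) x, key_lemma (d+1) (J+1) (by omega) x]
    ring
  · rw [zsum_trunc A J hAJ' , hstep (A+1)]
    rw [key_lemma d A (by omega) x, key_lemma (d+1) A (by omega) x]
    ring

/-! ### The matrix `V` and the product reindexing -/

def tEnt (m i j : ℕ) : ℝ :=
  if i / 2 ≤ j ∧ j ≤ i / 2 + (m - 1) then
    (if i % 2 = 0 then (pascalB m (j - i / 2) : ℝ) else (pascalA m (j - i / 2) : ℝ))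
  else 0

lemma tMat_apply (m : ℕ) (i j : Fin (2*(m-1))) : tMatPascal m i j = tEnt m i j := rfl

def vEnt (m k j : ℕ) : ℝ :=
  if k ≤ j then
    (-1)^(j-k) * ((j/2 + 1 + j % 2).choose (j-k) : ℝ) * (afac (m-2-j/2) (j-k) : ℝ)
  else 0

def vMat (m : ℕ) : Matrix (Fin (2*(m-1))) (Fin (2*(m-1))) ℝ := Matrix.of fun k j => vEnt m k j

lemma vMat_apply (m : ℕ) (k j : Fin (2*(m-1))) : vMat m k j = vEnt m k j := rfl

lemma tEnt_left (m i j : ℕ) (h : j < i / 2) : tEnt m i j = 0 := by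
  rw [tEnt, if_neg]; omega

lemma vEnt_low (m k j : ℕ) (h : j < k) : vEnt m k j = 0 := by
  rw [vEnt, if_neg]; omega

lemma vEnt_diag (m k : ℕ) : vEnt m k k = 1 := by
  rw [vEnt, if_pos (le_refl k)]
  simp

lemma sum_eq (m : ℕ) (i j : Fin (2*(m-1))) (hij : (i:ℕ)/2 ≤ (j:ℕ)) :
    (tMatPascal m * vMat m) i j
      = ∑ t ∈ range ((j:ℕ) - (i:ℕ)/2 + 1), tEnt m i ((j:ℕ) - t) * vEnt m ((j:ℕ) - t) j := by
  rw [Matrix.mul_apply]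
  have step1 : ∑ k : Fin (2*(m-1)), tMatPascal m i k * vMat m k j
      = ∑ k ∈ range (2*(m-1)), tEnt m (i:ℕ) k * vEnt m k (j:ℕ) :=
    Fin.sum_univ_eq_sum_range (fun k => tEnt m (i:ℕ) k * vEnt m k (j:ℕ)) (2*(m-1))
  rw [step1]
  have hjn : (j:ℕ) < 2*(m-1) := j.isLt
  have step2 : ∑ k ∈ Finset.Icc ((i:ℕ)/2) (j:ℕ), tEnt m (i:ℕ) k * vEnt m k (j:ℕ)
      = ∑ k ∈ range (2*(m-1)), tEnt m (i:ℕ) k * vEnt m k (j:ℕ) := by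
    apply Finset.sum_subset
    · intro k hk
      simp only [Finset.mem_Icc] at hk
      simp only [Finset.mem_range]
      omega
    · intro k hk hk2
      simp only [Finset.mem_Icc, not_and, not_le] at hk2
      rcases le_or_gt ((i:ℕ)/2) k with h | h
      · rw [vEnt_low m k (j:ℕ) (hk2 h), mul_zero]
      · rw [tEnt_left m (i:ℕ) k h, zero_mul]
  rw [← step2]
  apply Finset.sum_nbij' (i := fun k => (j:ℕ) - k) (j := fun t => (j:ℕ) - t)
  · intro k hk; simp only [Finset.mem_Icc] at hk; simp only [Finset.mem_range]; omega
  · intro t ht; simp only [Finset.mem_range] at ht; simp only [Finset.mem_Icc]; omega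
  · intro k hk; simp only [Finset.mem_Icc] at hk; omega
  · intro t ht; simp only [Finset.mem_range] at ht; omega
  · intro k hk
    simp only [Finset.mem_Icc] at hk
    have : (j:ℕ) - ((j:ℕ) - k) = k := by omega
    rw [this]

lemma gterm_eval (m i j t : ℕ) (hhj : i/2 ≤ j) (ht : t ≤ j - i/2) :
    tEnt m i (j-t) * vEnt m (j-t) j
      = (-1)^t * ((j/2 + 1 + j % 2).choose t : ℝ)
          * (afac (m-2-j/2) t : ℝ)
          * (if i % 2 = 0 then (pascalB m (j - i/2 - t) : ℝ)
              else (pascalA m (j - i/2 - t) : ℝ)) := by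
  have h1 : j - (j-t) = t := by omega
  have h2 : i/2 ≤ j - t := by omega
  have h3 : (j-t) - i/2 = j - i/2 - t := by omega
  rw [vEnt, if_pos (by omega : j - t ≤ j), h1, tEnt]
  by_cases hcond : j - t ≤ i/2 + (m-1)
  · rw [if_pos ⟨h2, hcond⟩, h3]
    ring
  · rw [if_neg (by tauto)]
    have hbig : m - 1 < j - i/2 - t := by omega
    have : (m-1).choose (j - i/2 - t) = 0 := Nat.choose_eq_zero_of_lt hbig
    rw [pascalA, pascalB, this]
    simp

lemma bridge (m : ℕ) (hm : 2 ≤ m) (c J t : ℕ) (hc : c ≤ m-2) (hJc : c+1 ≤ J) (ht : t ≤ J) :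
    ((m-1).choose (J-t) * (J-t).factorial : ℤ) * (ffp ((m-2-c : ℕ) : ℤ) t * ((m-2-c).factorial : ℤ))
      = ((m-1).factorial : ℤ) * ffp (((m-1 : ℕ) : ℤ) - (J : ℤ) + t) (J-c-1) := by
  rw [ffp_factorial (m-2-c) t]
  by_cases hs : J - t ≤ m-1
  · have hxv : ((m-1:ℕ):ℤ) - (J:ℤ) + t = ((m-1-(J-t) : ℕ) : ℤ) := by omega
    rw [hxv]
    have hvd : (m-1-(J-t)) + (J-c-1) = (m-2-c) + t := by omega
    have hne : ((m-1-(J-t)).factorial : ℤ) ≠ 0 := by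
      exact_mod_cast (Nat.factorial_ne_zero _)
    apply mul_right_cancel₀ hne
    have hch : ((m-1).choose (J-t) * (J-t).factorial * (m-1-(J-t)).factorial : ℕ)
        = (m-1).factorial := Nat.choose_mul_factorial_mul_factorial hs
    have hff := ffp_factorial (m-1-(J-t)) (J-c-1)
    calc ((m-1).choose (J-t) * (J-t).factorial : ℤ) * (((m-2-c) + t).factorial : ℤ)
          * ((m-1-(J-t)).factorial : ℤ)
        = (((m-1).choose (J-t) * (J-t).factorial * (m-1-(J-t)).factorial : ℕ) : ℤ)
            * (((m-2-c) + t).factorial : ℤ) := by push_cast; ring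
      _ = ((m-1).factorial : ℤ) * (((m-2-c) + t).factorial : ℤ) := by rw [hch]
      _ = ((m-1).factorial : ℤ) * (((m-1-(J-t)) + (J-c-1)).factorial : ℤ) := by rw [hvd]
      _ = ((m-1).factorial : ℤ) * (ffp ((m-1-(J-t) : ℕ) : ℤ) (J-c-1)
            * ((m-1-(J-t)).factorial : ℤ)) := by rw [hff]
      _ = ((m-1).factorial : ℤ) * ffp ((m-1-(J-t) : ℕ) : ℤ) (J-c-1)
            * ((m-1-(J-t)).factorial : ℤ) := by ring
  · have hchz : (m-1).choose (J-t) = 0 := Nat.choose_eq_zero_of_lt (by omega)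
    have hffz : ffp (((m-1:ℕ):ℤ) - (J:ℤ) + t) (J-c-1) = 0 :=
      ffp_eq_zero _ _ (by omega) (by omega)
    rw [hchz, hffz]
    push_cast
    ring

/-! ### The main sum computations -/

lemma TV_upper_sum (m : ℕ) (hm : 2 ≤ m) (i j : ℕ) (hij : i < j) (hj : j ≤ 2*m-3) :
    ∑ t ∈ range (j - i/2 + 1), tEnt m i (j-t) * vEnt m (j-t) j = 0 := by
  have hqne : (((m-2-j/2).factorial : ℝ)) ≠ 0 := Nat.cast_ne_zero.mpr (Nat.factorial_ne_zero _)
  have hmain : (∑ t ∈ range (j - i/2 + 1), tEnt m i (j-t) * vEnt m (j-t) j)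
      * ((m-2-j/2).factorial : ℝ) = 0 := by
    rw [Finset.sum_mul]
    have hbr : ∀ t, t ≤ j - i/2 →
        ((((m-1).choose (j-i/2-t) * (j-i/2-t).factorial : ℕ) : ℝ)
          * ((afac (m-2-j/2) t : ℝ) * ((m-2-j/2).factorial : ℝ))
        = (((m-1).factorial : ℕ) : ℝ)
            * ((ffp (((m-1:ℕ):ℤ) - ((j-i/2 : ℕ):ℤ) + t) (j-i/2-j/2-1) : ℤ) : ℝ)) := by
      intro t ht
      have hb := bridge m hm (j/2) (j-i/2) t (by omega) (by omega) ht
      have : ((afac (m-2-j/2) t : ℕ) : ℤ) = ffp ((m-2-j/2 : ℕ) : ℤ) t := afac_ffp _ _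
      rw [← this] at hb
      exact_mod_cast congrArg (fun z : ℤ => (z : ℝ)) hb
    by_cases hpar : i % 2 = 0
    · -- even row
      have hcast : ∀ t ∈ range (j - i/2 + 1),
          tEnt m i (j-t) * vEnt m (j-t) j * ((m-2-j/2).factorial : ℝ)
            = (((-1)^t * ((j/2+1+j%2).choose t : ℤ)
                * ((((j-i/2 : ℕ):ℤ)+1-t)
                  * (((m-1).factorial : ℤ)
                    * ffp (((m-1:ℕ):ℤ) - ((j-i/2 : ℕ):ℤ) + t) (j-i/2-j/2-1))) : ℤ) : ℝ) := by
        intro t ht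
        rw [mem_range] at ht
        rw [gterm_eval m i j t (by omega) (by omega), if_pos hpar]
        simp only [pascalB]
        have hfs : (j-i/2-t+1).factorial = (j-i/2-t).factorial * (j-i/2-t+1) := by
          rw [Nat.factorial_succ]; ring
        have hjt : ((j-i/2-t : ℕ) : ℝ) + 1 = ((j-i/2 : ℕ) : ℝ) + 1 - (t:ℝ) := by
          rw [Nat.cast_sub (by omega : t ≤ j - i/2)]; ring
        have h := hbr t (by omega)
        push_cast at h ⊢
        rw [hfs]
        push_cast
        linear_combination ((-1:ℝ)^t * ((j/2+1+j%2).choose t : ℝ)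
            * (((j-i/2-t : ℕ) : ℝ) + 1)) * h
          + ((-1:ℝ)^t * ((j/2+1+j%2).choose t : ℝ) * (((m-1).factorial : ℕ) : ℝ)
            * ((ffp (((m-1:ℕ):ℤ) - ((j-i/2 : ℕ):ℤ) + t) (j-i/2-j/2-1) : ℤ) : ℝ)) * hjt
      have hzero : (∑ t ∈ range ((j-i/2) + 1), (-1)^t * ((j/2+1+j%2).choose t : ℤ)
              * ((((j-i/2 : ℕ):ℤ)+1-t)
                * (((m-1).factorial : ℤ)
                  * ffp (((m-1:ℕ):ℤ) - ((j-i/2 : ℕ):ℤ) + t) (j-i/2-j/2-1)))) = 0 := by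
        have hstep : (∑ t ∈ range ((j-i/2) + 1), (-1)^t * ((j/2+1+j%2).choose t : ℤ)
              * ((((j-i/2 : ℕ):ℤ)+1-t)
                * (((m-1).factorial : ℤ)
                  * ffp (((m-1:ℕ):ℤ) - ((j-i/2 : ℕ):ℤ) + t) (j-i/2-j/2-1))))
            = ((m-1).factorial : ℤ) * ∑ t ∈ range ((j-i/2) + 1),
                (-1)^t * ((j/2+1+j%2).choose t : ℤ)
                * ((((j-i/2:ℕ):ℤ)+1-t)
                  * ffp (((m-1:ℕ):ℤ) - ((j-i/2 : ℕ):ℤ) + t) (j-i/2-j/2-1)) := by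
          rw [Finset.mul_sum]
          apply Finset.sum_congr rfl
          intro t _
          ring
        rw [hstep, zsum_even (j/2+1+j%2) (j-i/2-j/2-1) (j-i/2)
          (((m-1:ℕ):ℤ) - ((j-i/2 : ℕ):ℤ)) (by omega) (by omega), mul_zero]
      rw [Finset.sum_congr rfl hcast]
      exact_mod_cast congrArg (fun z : ℤ => (z : ℝ)) hzero
    · -- odd row
      have hpar1 : i % 2 = 1 := by omega
      have hcast : ∀ t ∈ range (j - i/2 + 1),
          tEnt m i (j-t) * vEnt m (j-t) j * ((m-2-j/2).factorial : ℝ)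
            = (((-1)^t * ((j/2+1+j%2).choose t : ℤ)
                * (((m-1).factorial : ℤ)
                    * ffp (((m-1:ℕ):ℤ) - ((j-i/2 : ℕ):ℤ) + t) (j-i/2-j/2-1)) : ℤ) : ℝ) := by
        intro t ht
        rw [mem_range] at ht
        rw [gterm_eval m i j t (by omega) (by omega), if_neg (by omega)]
        simp only [pascalA]
        have h := hbr t (by omega)
        push_cast at h ⊢
        linear_combination ((-1:ℝ)^t * ((j/2+1+j%2).choose t : ℝ)) * h
      have hzero : (∑ t ∈ range ((j-i/2) + 1), (-1)^t * ((j/2+1+j%2).choose t : ℤ)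
              * (((m-1).factorial : ℤ)
                * ffp (((m-1:ℕ):ℤ) - ((j-i/2 : ℕ):ℤ) + t) (j-i/2-j/2-1))) = 0 := by
        have hstep : (∑ t ∈ range ((j-i/2) + 1), (-1)^t * ((j/2+1+j%2).choose t : ℤ)
              * (((m-1).factorial : ℤ)
                * ffp (((m-1:ℕ):ℤ) - ((j-i/2 : ℕ):ℤ) + t) (j-i/2-j/2-1)))
            = ((m-1).factorial : ℤ) * ∑ t ∈ range ((j-i/2) + 1),
                (-1)^t * ((j/2+1+j%2).choose t : ℤ)
                * ffp (((m-1:ℕ):ℤ) - ((j-i/2 : ℕ):ℤ) + t) (j-i/2-j/2-1) := by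
          rw [Finset.mul_sum]
          apply Finset.sum_congr rfl
          intro t _
          ring
        rw [hstep, zsum_odd (j/2+1+j%2) (j-i/2-j/2-1) (j-i/2)
          (((m-1:ℕ):ℤ) - ((j-i/2 : ℕ):ℤ)) (by omega) (by omega), mul_zero]
      rw [Finset.sum_congr rfl hcast]
      exact_mod_cast congrArg (fun z : ℤ => (z : ℝ)) hzero
  rcases mul_eq_zero.mp hmain with h | h
  · exact h
  · exact absurd h hqne



lemma choose_succ_sub (c t : ℕ) (ht : t ≤ c) :
    (c+1).choose t * (c+1-t) = (c+1) * c.choose t := by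
  have h1 : (c+1).choose t * t.factorial * (c+1-t).factorial = (c+1).factorial :=
    Nat.choose_mul_factorial_mul_factorial (by omega)
  have h2 : c.choose t * t.factorial * (c-t).factorial = c.factorial :=
    Nat.choose_mul_factorial_mul_factorial ht
  have h3 : (c+1-t).factorial = (c+1-t) * (c-t).factorial := by
    rw [show c+1-t = (c-t)+1 by omega, Nat.factorial_succ]
  have h4 : (c+1).factorial = (c+1) * c.factorial := Nat.factorial_succ c
  have hne : t.factorial * (c-t).factorial ≠ 0 :=
    Nat.mul_ne_zero (Nat.factorial_ne_zero t) (Nat.factorial_ne_zero _)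
  apply Nat.eq_of_mul_eq_mul_right (Nat.pos_of_ne_zero hne)
  calc (c+1).choose t * (c+1-t) * (t.factorial * (c-t).factorial)
      = (c+1).choose t * t.factorial * ((c+1-t) * (c-t).factorial) := by ring
    _ = (c+1).choose t * t.factorial * (c+1-t).factorial := by rw [h3]
    _ = (c+1).factorial := h1
    _ = (c+1) * (c.choose t * t.factorial * (c-t).factorial) := by rw [h4, h2]
    _ = (c+1) * c.choose t * (t.factorial * (c-t).factorial) := by ring

lemma TV_diag_odd_sum (m : ℕ) (hm : 2 ≤ m) (j : ℕ) (hpar : j % 2 = 1) (hj : j ≤ 2*m-3) :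
    ∑ t ∈ range (j - j/2 + 1), tEnt m j (j-t) * vEnt m (j-t) j
      = (-1)^(j/2+1) * ((m-1).choose (j/2+1) : ℝ) * ((j/2+1).factorial : ℝ) := by
  have hqne : (((m-2-j/2).factorial : ℝ)) ≠ 0 := Nat.cast_ne_zero.mpr (Nat.factorial_ne_zero _)
  apply mul_right_cancel₀ hqne
  rw [Finset.sum_mul]
  have hJ : j - j/2 = j/2 + 1 := by omega
  have hcast : ∀ t ∈ range (j - j/2 + 1),
      tEnt m j (j-t) * vEnt m (j-t) j * ((m-2-j/2).factorial : ℝ)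
        = (((m-1).factorial : ℕ) : ℝ) * (((-1)^t * ((j/2+1+j%2).choose t : ℤ) : ℤ) : ℝ) := by
    intro t ht
    rw [mem_range] at ht
    rw [gterm_eval m j j t (by omega) (by omega), if_neg (by omega)]
    simp only [pascalA]
    have hnat : (m-1).choose (j-j/2-t) * (j-j/2-t).factorial
        * (afac (m-2-j/2) t * (m-2-j/2).factorial) = (m-1).factorial := by
      rw [afac_factorial]
      have h1 : (m-2-j/2) + t = m-1-(j-j/2-t) := by omega
      rw [h1]
      exact Nat.choose_mul_factorial_mul_factorial (by omega)
    have hc := congrArg (fun n : ℕ => (n : ℝ)) hnat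
    push_cast at hc ⊢
    linear_combination ((-1:ℝ)^t * ((j/2+1+j%2).choose t : ℝ)) * hc
  rw [Finset.sum_congr rfl hcast, ← Finset.mul_sum]
  have hsum : ∑ t ∈ range (j - j/2 + 1), (((-1)^t * ((j/2+1+j%2).choose t : ℤ) : ℤ) : ℝ)
      = (((-1)^(j/2+1) : ℤ) : ℝ) := by
    rw [hJ]
    have hA : j/2+1+j%2 = (j/2+1)+1 := by omega
    rw [hA]
    exact_mod_cast congrArg (fun z : ℤ => (z : ℝ)) (partial_alt (j/2+1))
  rw [hsum]
  have hch : (m-1).choose (j/2+1) * (j/2+1).factorial * (m-2-j/2).factorial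
      = (m-1).factorial := by
    have h1 : m-2-j/2 = m-1-(j/2+1) := by omega
    rw [h1]
    exact Nat.choose_mul_factorial_mul_factorial (by omega)
  have hcr := congrArg (fun n : ℕ => (n : ℝ)) hch
  push_cast at hcr ⊢
  linear_combination ((-1:ℝ)^(j/2)) * hcr

lemma TV_diag_even_sum (m : ℕ) (hm : 2 ≤ m) (j : ℕ) (hpar : j % 2 = 0) (hj : j ≤ 2*m-3) :
    ∑ t ∈ range (j - j/2 + 1), tEnt m j (j-t) * vEnt m (j-t) j
      = ((j/2+1).factorial : ℝ) := by
  have hqne : (((m-2-j/2).factorial : ℝ)) ≠ 0 := Nat.cast_ne_zero.mpr (Nat.factorial_ne_zero _)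
  have hJ : j - j/2 = j/2 := by omega
  have hcast : ∀ t ∈ range (j - j/2 + 1),
      tEnt m j (j-t) * vEnt m (j-t) j
        = (((j/2+1 : ℕ) : ℝ) * ((m-1).factorial : ℝ) / ((m-2-j/2).factorial : ℝ))
            * ((-1)^t * ((j/2).choose t : ℝ) / ((((m-2-j/2) : ℕ):ℝ)+1+t)) := by
    intro t ht
    rw [mem_range, hJ] at ht
    rw [gterm_eval m j j t (by omega) (by omega), if_pos hpar]
    simp only [pascalB]
    have hy : (0:ℝ) < (((m-2-j/2) : ℕ):ℝ)+1+t := by positivity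
    rw [div_mul_div_comm, eq_div_iff (by positivity)]
    -- ℕ identity
    have hnat : (j/2+1+j%2).choose t * (afac (m-2-j/2) t
          * ((m-1).choose (j-j/2-t) * (j-j/2-t+1).factorial))
          * ((m-2-j/2).factorial * ((m-2-j/2)+1+t))
        = (j/2+1) * ((m-1).factorial * ((j/2).choose t)) := by
      have he : j/2+1+j%2 = j/2+1 := by omega
      have hs : j-j/2-t = j/2-t := by omega
      have hfs : (j/2-t+1).factorial = (j/2-t+1) * (j/2-t).factorial := Nat.factorial_succ _
      have hqt : afac (m-2-j/2) t * (m-2-j/2).factorial = ((m-2-j/2)+t).factorial :=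
        afac_factorial _ _
      have hq1 : ((m-2-j/2)+t).factorial * ((m-2-j/2)+1+t) = ((m-2-j/2)+t+1).factorial := by
        rw [Nat.factorial_succ]
        ring
      have hch : (m-1).choose (j/2-t) * (j/2-t).factorial * ((m-2-j/2)+t+1).factorial
          = (m-1).factorial := by
        have h1 : (m-2-j/2)+t+1 = m-1-(j/2-t) := by omega
        rw [h1]
        exact Nat.choose_mul_factorial_mul_factorial (by omega)
      have hcc : (j/2+1).choose t * (j/2+1-t) = (j/2+1) * (j/2).choose t :=
        choose_succ_sub (j/2) t (by omega)
      calc (j/2+1+j%2).choose t * (afac (m-2-j/2) t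
          * ((m-1).choose (j-j/2-t) * (j-j/2-t+1).factorial))
          * ((m-2-j/2).factorial * ((m-2-j/2)+1+t))
          = ((j/2+1).choose t * (j/2-t+1))
            * ((m-1).choose (j/2-t) * (j/2-t).factorial
              * ((afac (m-2-j/2) t * (m-2-j/2).factorial) * ((m-2-j/2)+1+t))) := by
            rw [he, hs, hfs]; ring
        _ = ((j/2+1).choose t * (j/2-t+1))
            * ((m-1).choose (j/2-t) * (j/2-t).factorial * ((m-2-j/2)+t+1).factorial) := by
            rw [hqt, hq1]
        _ = ((j/2+1).choose t * (j/2-t+1)) * (m-1).factorial := by rw [hch]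
        _ = ((j/2+1).choose t * (j/2+1-t)) * (m-1).factorial := by
            congr 2; omega
        _ = (j/2+1) * ((m-1).factorial * ((j/2).choose t)) := by rw [hcc]; ring
    have hcr := congrArg (fun n : ℕ => (n : ℝ)) hnat
    push_cast at hcr ⊢
    linear_combination ((-1:ℝ)^t) * hcr
  rw [Finset.sum_congr rfl hcast, ← Finset.mul_sum]
  have hx : (0:ℝ) < (((m-2-j/2):ℕ):ℝ) + 1 := by positivity
  have hb := beta_lemma (j/2) ((((m-2-j/2):ℕ):ℝ)+1) hx
  have hbeq : ∑ t ∈ range (j - j/2 + 1), ((-1)^t * ((j/2).choose t : ℝ) / ((((m-2-j/2):ℕ):ℝ)+1+t))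
      = ((j/2).factorial : ℝ) / ∏ r ∈ range (j/2+1), (((((m-2-j/2):ℕ):ℝ)+1)+r) := by
    rw [hJ]
    exact hb
  rw [hbeq]
  -- evaluate the product
  have hprod : ∏ r ∈ range (j/2+1), (((((m-2-j/2):ℕ):ℝ)+1)+r) = (afac (m-2-j/2) (j/2+1) : ℝ) := by
    induction (j/2+1) with
    | zero => simp [afac]
    | succ n ih =>
        rw [Finset.prod_range_succ, ih, afac]
        push_cast
        ring
  rw [hprod]
  have hap : (afac (m-2-j/2) (j/2+1) : ℝ) * ((m-2-j/2).factorial : ℝ) = ((m-1).factorial : ℝ) := by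
    have h := afac_factorial (m-2-j/2) (j/2+1)
    have h2 : (m-2-j/2) + (j/2+1) = m-1 := by omega
    rw [h2] at h
    exact_mod_cast congrArg (fun n : ℕ => (n : ℝ)) h
  have hane : (afac (m-2-j/2) (j/2+1) : ℝ) ≠ 0 := by
    intro h0
    rw [h0, zero_mul] at hap
    exact Nat.cast_ne_zero.mpr (Nat.factorial_ne_zero (m-1)) hap.symm
  have hfs : ((j/2+1).factorial : ℝ) = (((j/2 : ℕ):ℝ) + 1) * ((j/2).factorial : ℝ) := by
    rw [Nat.factorial_succ]; push_cast; ring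
  rw [div_mul_div_comm, div_eq_iff (mul_ne_zero hqne hane), hfs]
  push_cast
  linear_combination (-((((j/2 : ℕ):ℝ) + 1) * ((j/2).factorial : ℝ))) * hap


/-! ### Abstract LU diagonal lemma -/

lemma lu_diag_abstract {n : ℕ} (T L U V : Matrix (Fin n) (Fin n) ℝ)
    (hLU : T = L * U) (hL1 : ∀ i, L i i = 1)
    (hL : ∀ i j : Fin n, (i:ℕ) < (j:ℕ) → L i j = 0)
    (hU : ∀ i j : Fin n, (j:ℕ) < (i:ℕ) → U i j = 0)
    (hV1 : ∀ i, V i i = 1) (hV : ∀ k j : Fin n, (j:ℕ) < (k:ℕ) → V k j = 0)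
    (hTV0 : ∀ i j : Fin n, (i:ℕ) < (j:ℕ) → (T * V) i j = 0) (i : Fin n) :
    U i i = (T * V) i i := by
  have hassoc : T * V = L * (U * V) := by rw [hLU, Matrix.mul_assoc]
  have claim : ∀ N : ℕ, ∀ a b : Fin n, (a:ℕ) < N → (a:ℕ) < (b:ℕ) → (U * V) a b = 0 := by
    intro N
    induction N with
    | zero => intro a b h1 _; omega
    | succ N ih =>
        intro a b haN hab
        have h0 := hTV0 a b hab
        rw [hassoc, Matrix.mul_apply] at h0
        have hsum : ∑ k : Fin n, L a k * (U*V) k b = L a a * (U*V) a b := by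
          apply Finset.sum_eq_single
          · intro k _ hk
            rcases Nat.lt_or_ge (k:ℕ) (a:ℕ) with h | h
            · rw [ih k b (by omega) (by omega), mul_zero]
            · have hlt : (a:ℕ) < (k:ℕ) := by
                rcases Nat.lt_or_ge (a:ℕ) (k:ℕ) with h2 | h2
                · exact h2
                · exact absurd (Fin.ext (by omega : (k:ℕ) = (a:ℕ))) hk
              rw [hL a k hlt, zero_mul]
          · intro h; exact absurd (Finset.mem_univ a) h
        rw [hsum, hL1, one_mul] at h0
        exact h0
  have h1 : (T*V) i i = (U*V) i i := by
    rw [hassoc, Matrix.mul_apply]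
    have hsum : ∑ k : Fin n, L i k * (U*V) k i = L i i * (U*V) i i := by
      apply Finset.sum_eq_single
      · intro k _ hk
        rcases Nat.lt_or_ge (k:ℕ) (i:ℕ) with h | h
        · rw [claim ((k:ℕ)+1) k i (by omega) (by omega), mul_zero]
        · have hlt : (i:ℕ) < (k:ℕ) := by
            rcases Nat.lt_or_ge (i:ℕ) (k:ℕ) with h2 | h2
            · exact h2
            · exact absurd (Fin.ext (by omega : (k:ℕ) = (i:ℕ))) hk
          rw [hL i k hlt, zero_mul]
      · intro h; exact absurd (Finset.mem_univ i) h
    rw [hsum, hL1, one_mul]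
  have h2 : (U*V) i i = U i i := by
    rw [Matrix.mul_apply]
    have hsum : ∑ k : Fin n, U i k * V k i = U i i * V i i := by
      apply Finset.sum_eq_single
      · intro k _ hk
        rcases Nat.lt_or_ge (k:ℕ) (i:ℕ) with h | h
        · rw [hU i k h, zero_mul]
        · have hlt : (i:ℕ) < (k:ℕ) := by
            rcases Nat.lt_or_ge (i:ℕ) (k:ℕ) with h2 | h2
            · exact h2
            · exact absurd (Fin.ext (by omega : (k:ℕ) = (i:ℕ))) hk
          rw [hV k i hlt, mul_zero]
      · intro h; exact absurd (Finset.mem_univ i) h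
    rw [hsum, hV1, mul_one]
  rw [h1, h2]

/-- In the LU decomposition T_m = L_m U_m (L_m unit lower triangular,
U_m upper triangular), the diagonal entries of U_m satisfy u_{2i−1,2i−1} = i! and
u_{2i,2i} = (−1)^i·C(m−1,i)·i! for i = 1, …, m−1 (1-based indexing). -/
theorem lu_diag_sylvester_pascal (m : ℕ) (hm : 2 ≤ m)
    (L U : Matrix (Fin (2 * (m - 1))) (Fin (2 * (m - 1))) ℝ)
    (hL1 : ∀ i, L i i = 1)
    (hL : ∀ i j : Fin (2 * (m - 1)), (i : ℕ) < (j : ℕ) → L i j = 0)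
    (hU : ∀ i j : Fin (2 * (m - 1)), (j : ℕ) < (i : ℕ) → U i j = 0)
    (hLU : tMatPascal m = L * U) :
    ∀ i : Fin (m - 1),
      U ⟨2 * (i : ℕ), by omega⟩ ⟨2 * (i : ℕ), by omega⟩ = (((i : ℕ) + 1).factorial : ℝ) ∧
      U ⟨2 * (i : ℕ) + 1, by omega⟩ ⟨2 * (i : ℕ) + 1, by omega⟩ =
        (-1) ^ ((i : ℕ) + 1) * (Nat.choose (m - 1) ((i : ℕ) + 1) : ℝ) *
          (((i : ℕ) + 1).factorial : ℝ) := by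
  intro i
  have hV1 : ∀ k : Fin (2*(m-1)), vMat m k k = 1 := fun k => vEnt_diag m k
  have hVlow : ∀ k j : Fin (2*(m-1)), (j:ℕ) < (k:ℕ) → vMat m k j = 0 :=
    fun k j h => vEnt_low m k j h
  have hTV0 : ∀ a b : Fin (2*(m-1)), (a:ℕ) < (b:ℕ) → (tMatPascal m * vMat m) a b = 0 := by
    intro a b hab
    rw [sum_eq m a b (by omega)]
    exact TV_upper_sum m hm a b hab (by have := b.isLt; omega)
  constructor
  · have hdiag := lu_diag_abstract (tMatPascal m) L U (vMat m) hLU hL1 hL hU hV1 hVlow hTV0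
      ⟨2 * (i : ℕ), by omega⟩
    rw [hdiag, sum_eq m _ _ (by omega)]
    have heval := TV_diag_even_sum m hm (2*(i:ℕ)) (by omega)
      (by have := i.isLt; omega)
    simp only [Fin.val_mk] at heval ⊢
    rw [heval]
    congr 2
    omega
  · have hdiag := lu_diag_abstract (tMatPascal m) L U (vMat m) hLU hL1 hL hU hV1 hVlow hTV0
      ⟨2 * (i : ℕ) + 1, by omega⟩
    rw [hdiag, sum_eq m _ _ (by omega)]
    have heval := TV_diag_odd_sum m hm (2*(i:ℕ)+1) (by omega)
      (by have := i.isLt; omega)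
    simp only [Fin.val_mk] at heval ⊢
    rw [heval]
    have h2 : (2*(i:ℕ)+1)/2 = (i:ℕ) := by omega
    rw [h2]
end

section
/- The row permutation interleaving the two blocks of the Sylvester-Pascal matrix S_m (moving row m to position 1, row m+1 to position 3, etc., preserving relative order otherwise) has sign (−1)^{m(m−1)/2}; hence det(S_m) = (−1)^{m(m−1)/2} det(T_m). -/
open Equiv Finset

namespace Fin

theorem val_cycleIcc_apply {N : ℕ} [NeZero N] {i j : Fin N} (hij : i ≤ j) (k : Fin N) :
    (cycleIcc i j k : ℕ) =
      if k < i ∨ j < k then (k : ℕ) else if k = j then (i : ℕ) else (k : ℕ) + 1 := by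
  rcases lt_or_ge k i with hki | hik
  · simp [cycleIcc_of_lt hki, hki]
  rcases lt_or_ge j k with hjk | hkj
  · simp [cycleIcc_of_gt hjk, hjk]
  rcases eq_or_lt_of_le hkj with rfl | hkj
  · simp [cycleIcc_of_last hij, not_lt.mpr hik]
  rw [cycleIcc_of_ge_of_lt hik hkj, val_add_one_of_lt' (by omega)]
  simp [not_lt.mpr hik, not_lt.mpr hkj.le, hkj.ne]

end Fin

/-- Sends a position to the row of `S_m` (`n = m - 1`, rows numbered from `0`) that sits there
once the first `k` b-rows have been moved up to the even positions `< 2k`: the odd positions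
`< 2k` hold the first `k` a-rows, followed by the remaining a-rows, then the remaining b-rows. -/
noncomputable def partialInterleave (n k : ℕ) : Perm (Fin (2 * n)) :=
  Equiv.ofBijective
    (fun p => ⟨if (p : ℕ) < 2 * k then (if (p : ℕ) % 2 = 0 then p / 2 + n else p / 2)
      else if (p : ℕ) < n + k then p - k else p, by split_ifs <;> omega⟩)
    (Finite.injective_iff_bijective.mp fun p q hpq => by
      rw [Fin.mk.injEq] at hpq
      ext
      split_ifs at hpq <;> omega)

theorem val_partialInterleave (n k : ℕ) (p : Fin (2 * n)) :
    (partialInterleave n k p : ℕ) = if (p : ℕ) < 2 * k then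
      (if (p : ℕ) % 2 = 0 then p / 2 + n else p / 2) else if (p : ℕ) < n + k then p - k else p :=
  rfl

theorem partialInterleave_zero (n : ℕ) : partialInterleave n 0 = 1 := by
  ext p
  rw [val_partialInterleave]
  split_ifs <;> simp <;> omega

theorem partialInterleave_succ_mul_cycleIcc {n k : ℕ} (hk : k < n) :
    partialInterleave n (k + 1) * Fin.cycleIcc ⟨2 * k, by omega⟩ ⟨n + k, by omega⟩ =
      partialInterleave n k := by
  have : NeZero (2 * n) := ⟨by omega⟩
  ext p
  rw [Perm.mul_apply, val_partialInterleave, val_partialInterleave,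
    Fin.val_cycleIcc_apply (Fin.mk_le_mk.mpr (by omega))]
  simp only [Fin.lt_def, Fin.ext_iff]
  split_ifs <;> omega

theorem sign_partialInterleave {n k : ℕ} (hk : k ≤ n) :
    Perm.sign (partialInterleave n k) = (-1) ^ (∑ j ∈ range k, (n - j)) := by
  induction k with
  | zero => simp [partialInterleave_zero]
  | succ k ih =>
    have : NeZero (2 * n) := ⟨by omega⟩
    have hstep := congrArg Perm.sign (partialInterleave_succ_mul_cycleIcc hk)
    rw [Perm.sign_mul, Fin.sign_cycleIcc_of_le (Fin.mk_le_mk.mpr (by omega)), ih (by omega),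
      ← eq_mul_inv_iff_mul_eq] at hstep
    rw [hstep, sum_range_succ, pow_add, ← inv_pow, Int.units_inv_eq_self]
    congr 2
    show n + k - 2 * k = n - k
    omega

theorem sum_range_sub_pred (m : ℕ) : ∑ j ∈ range (m - 1), (m - 1 - j) = ∑ j ∈ range m, j := by
  cases m with
  | zero => rfl
  | succ n =>
    rw [sum_range_succ', add_zero, Nat.add_sub_cancel, ← sum_range_reflect]
    exact sum_congr rfl fun j hj => by simp at hj; omega

theorem Matrix.det_eq_sign_mul_det_submatrix {n R : Type*} [DecidableEq n] [Fintype n]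
    [CommRing R] (σ : Perm n) (M : Matrix n n R) :
    M.det = Perm.sign σ * (M.submatrix σ id).det := by
  rw [Matrix.det_permute, ← mul_assoc, ← Int.cast_mul, ← Units.val_mul, Int.units_mul_self,
    Units.val_one, Int.cast_one, one_mul]

theorem tMatPascal_eq_submatrix {m : ℕ} (σ : Perm (Fin (2 * (m - 1))))
    (hσ : ∀ i : Fin (2 * (m - 1)),
      (σ i : ℕ) = if (i : ℕ) % 2 = 0 then (i : ℕ) / 2 + (m - 1) else (i : ℕ) / 2) :
    tMatPascal m = (sylvesterPascal m).submatrix σ id := by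
  ext i j
  simp only [tMatPascal, sylvesterPascal, Matrix.submatrix_apply, Matrix.of_apply, id, hσ i]
  have := i.isLt
  by_cases hi : (i : ℕ) % 2 = 0 <;> simp [hi, show (i : ℕ) / 2 < m - 1 by omega]

theorem sign_interleave_and_det_general (m : ℕ)
    (σ : Equiv.Perm (Fin (2 * (m - 1))))
    (hσ : ∀ i : Fin (2 * (m - 1)),
      ((σ i : ℕ)) = if (i : ℕ) % 2 = 0 then (i : ℕ) / 2 + (m - 1) else (i : ℕ) / 2) :
    Equiv.Perm.sign σ = ((-1 : ℤˣ)) ^ (m * (m - 1) / 2) ∧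
    (sylvesterPascal m).det = (-1 : ℝ) ^ (m * (m - 1) / 2) * (tMatPascal m).det := by
  have hσ_eq : σ = partialInterleave (m - 1) (m - 1) := by
    ext i
    rw [hσ, val_partialInterleave, if_pos i.isLt]
  have hsign : Perm.sign σ = (-1) ^ (m * (m - 1) / 2) := by
    rw [hσ_eq, sign_partialInterleave le_rfl, sum_range_sub_pred, sum_range_id]
  refine ⟨hsign, ?_⟩
  rw [Matrix.det_eq_sign_mul_det_submatrix σ, ← tMatPascal_eq_submatrix σ hσ, hsign]
  simp

/-- The row permutation interleaving the two blocks of S_m (sending the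
row at position i of T_m to the row of S_m at position (m−1) + i/2 if i is even, and
i/2 if i is odd, in 0-based indexing) has sign (−1)^{m(m−1)/2}; hence
det S_m = (−1)^{m(m−1)/2} · det T_m. -/
theorem sign_interleave_and_det (m : ℕ) (hm : 2 ≤ m)
    (σ : Equiv.Perm (Fin (2 * (m - 1))))
    (hσ : ∀ i : Fin (2 * (m - 1)),
      ((σ i : ℕ)) = if (i : ℕ) % 2 = 0 then (i : ℕ) / 2 + (m - 1) else (i : ℕ) / 2) :
    Equiv.Perm.sign σ = ((-1 : ℤˣ)) ^ (m * (m - 1) / 2) ∧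
    (sylvesterPascal m).det = (-1 : ℝ) ^ (m * (m - 1) / 2) * (tMatPascal m).det :=
  sign_interleave_and_det_general m σ hσ
end

section
/- The product (−1)^{m(m−1)/2} · ∏_{i=1}^{m−1} [i! · (−1)^i C(m−1,i) i!] equals [(m−1)!]^m, for all m ≥ 2. -/
/-! The signs multiply to `(-1)^(1 + 2 + ⋯ + (m - 1)) = (-1)^(m(m-1)/2)`, which cancels the
prefactor, so with `n = m - 1` what remains is `∏_{k=1}^{n} C(n, k) k! k! = n!^(n+1)`. -/

open Finset Nat

/-- Multiplying by `∏ₖ (n - k)! = ∏ₖ k!` turns each factor `C(n, k) k! k!` into `n! k!`,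
and `∏_{k=1}^n k! = n! ∏_{k=0}^{n-1} k!` then leaves one more factor `n!`. -/
theorem prod_range_choose_mul_factorial_mul_factorial (n : ℕ) :
    ∏ k ∈ range n, n.choose (k + 1) * (k + 1)! * (k + 1)! = n ! ^ (n + 1) := by
  have hreflect : ∏ k ∈ range n, (n - (k + 1))! = ∏ k ∈ range n, k ! := by
    rw [← prod_range_reflect (fun k => k !) n]
    refine prod_congr rfl fun k _ => ?_
    rw [Nat.sub_sub, add_comm 1 k]
  have hfactor : ∀ k ∈ range n,
      n.choose (k + 1) * (k + 1)! * (k + 1)! * (n - (k + 1))! = n ! * (k + 1)! := by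
    intro k hk
    rw [mul_right_comm, choose_mul_factorial_mul_factorial (mem_range.mp hk)]
  have hsf : ∏ k ∈ range n, (k + 1)! = n ! * ∏ k ∈ range n, k ! := by
    rw [prod_range_factorial_succ, ← prod_range_succ_factorial, prod_range_succ, mul_comm]
  refine Nat.eq_of_mul_eq_mul_right (prod_pos fun k (_ : k ∈ range n) => factorial_pos k) ?_
  rw [← hreflect, ← prod_mul_distrib, prod_congr rfl hfactor, prod_mul_distrib, prod_const,
    card_range, hsf, hreflect, ← mul_assoc, ← pow_succ]

theorem sum_range_sub_one_add_one (m : ℕ) : ∑ i ∈ range (m - 1), (i + 1) = m * (m - 1) / 2 := by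
  rw [← sum_range_id]
  rcases m with _ | n
  · rfl
  · rw [sum_range_succ', Nat.add_sub_cancel, add_zero]

theorem diag_product_identity_general (m : ℕ) :
    ((-1 : ℤ) ^ (m * (m - 1) / 2) *
        ∏ i ∈ Finset.range (m - 1),
          (((i + 1).factorial : ℤ) *
            ((-1 : ℤ) ^ (i + 1) * (Nat.choose (m - 1) (i + 1) : ℤ) *
              ((i + 1).factorial : ℤ)))) =
      ((m - 1).factorial : ℤ) ^ m := by
  have hfactor : ∀ i ∈ range (m - 1),
      ((i + 1)! : ℤ) * ((-1) ^ (i + 1) * ((m - 1).choose (i + 1) : ℤ) * ((i + 1)! : ℤ)) =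
        (-1) ^ (i + 1) * (((m - 1).choose (i + 1) * (i + 1)! * (i + 1)! : ℕ) : ℤ) := by
    intro i _
    push_cast
    ring
  rw [prod_congr rfl hfactor, prod_mul_distrib, prod_pow_eq_pow_sum, sum_range_sub_one_add_one,
    ← mul_assoc, ← pow_add, Even.neg_one_pow ⟨_, rfl⟩, one_mul, ← Nat.cast_prod,
    prod_range_choose_mul_factorial_mul_factorial]
  rcases m with _ | n
  · rfl
  · push_cast
    rfl

/-- (−1)^{m(m−1)/2} · ∏_{i=1}^{m−1} [i! · (−1)^i C(m−1,i) i!]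
equals [(m−1)!]^m, for all m ≥ 2. -/
theorem diag_product_identity (m : ℕ) (hm : 2 ≤ m) :
    ((-1 : ℤ) ^ (m * (m - 1) / 2) *
        ∏ i ∈ Finset.range (m - 1),
          (((i + 1).factorial : ℤ) *
            ((-1 : ℤ) ^ (i + 1) * (Nat.choose (m - 1) (i + 1) : ℤ) *
              ((i + 1).factorial : ℤ)))) =
      ((m - 1).factorial : ℤ) ^ m :=
  diag_product_identity_general m
end
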